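/- arXiv:2303.17172 — 5 statements merged into one kernel-verified Lean document; each statement's English description precedes it below -/
import Mathlib

section
/- If C is a linear code over F_q all of whose nonzero codeword weights are divisible by Δ, where q divides Δ, and H is a hyperplane of the ambient projective space, then the restriction of the associated multiset of points to H is (Δ/q)-divisible; equivalently, in geometric terms: if M is a multiset of points in PG(v-1,q) with M(H') ≡ |M| (mod Δ) for all hyperplanes H', then the restricted multiset M|_H satisfies M|_H(S) ≡ M(H) (mod Δ/q) for every hyperplane S of H. -/
/-!
A hyperplane `S` of `H` has codimension two in `V`, so the hyperplanes of `V` through `S` are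
the `q + 1` preimages of the points of the projective line `V ⧸ S`. They cover each point of `S`
`q + 1` times and every other point once, so the sum of `M` over them is `q · M(S) + |M|`. Each
summand is `≡ |M| (mod Δ)`, whence `q · M(S) ≡ q · |M| (mod Δ)`, i.e. `M(S) ≡ |M| (mod Δ/q)`;
together with `M(H) ≡ |M| (mod Δ)` and `M|_H(S) = M(S)` this is the claim.
-/

open scoped Classical

noncomputable def MVal {F V : Type*} [Field F] [AddCommGroup V] [Module F V]
    (M : Projectivization F V → ℕ) (K : Submodule F V) : ℕ :=
  ∑ᶠ P ∈ {P : Projectivization F V | P.submodule ≤ K}, M P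

def IsDivisible {F V : Type*} [Field F] [AddCommGroup V] [Module F V] (Δ : ℕ)
    (M : Projectivization F V → ℕ) : Prop :=
  ∀ H : Submodule F V, Module.finrank F H + 1 = Module.finrank F V →
    MVal M H ≡ MVal M ⊤ [MOD Δ]

def IsSpanning {F V : Type*} [Field F] [AddCommGroup V] [Module F V]
    (M : Projectivization F V → ℕ) : Prop :=
  (⨆ P ∈ {P : Projectivization F V | 0 < M P}, P.submodule) = ⊤

def gaussNum (q k : ℕ) : ℕ := ∑ i ∈ Finset.range k, q ^ i

def IsProjBase {F V : Type*} [Field F] [AddCommGroup V] [Module F V]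
    (n : ℕ) (B : Finset (Projectivization F V)) : Prop :=
  B.card = n ∧ ∀ T ⊆ B, T.card = n - 1 →
    Module.finrank F ((⨆ P ∈ T, Projectivization.submodule P) : Submodule F V) = n - 1

open scoped LinearAlgebra.Projectivization

namespace Projectivization

variable {F V : Type*} [Field F] [AddCommGroup V] [Module F V]

theorem existsUnique_le_submodule {U : Submodule F V} (hU : Module.finrank F U = 1) :
    ∃! ℓ : ℙ F V, U ≤ ℓ.submodule := by
  refine ⟨mk'' U hU, (submodule_mk'' U hU).ge, fun ℓ hℓ => submodule_injective ?_⟩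
  rw [submodule_mk'']
  exact (Submodule.eq_of_le_of_finrank_eq hℓ (by rw [hU, finrank_submodule])).symm

theorem finrank_map_mkQ_submodule {S : Submodule F V} {P : ℙ F V} (hP : ¬ P.submodule ≤ S) :
    Module.finrank F (P.submodule.map S.mkQ) = 1 := by
  have hrep : S.mkQ P.rep ≠ 0 := by
    rw [Ne, Submodule.mkQ_apply, Submodule.Quotient.mk_eq_zero]
    rwa [submodule_eq, Submodule.span_singleton_le_iff_mem] at hP
  rw [submodule_eq, Submodule.map_span, Set.image_singleton, finrank_span_singleton hrep]

theorem existsUnique_le_comap_mkQ {S : Submodule F V} {P : ℙ F V} (hP : ¬ P.submodule ≤ S) :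
    ∃! ℓ : ℙ F (V ⧸ S), P.submodule ≤ ℓ.submodule.comap S.mkQ := by
  simpa only [← Submodule.map_le_iff_le_comap] using
    existsUnique_le_submodule (finrank_map_mkQ_submodule hP)

end Projectivization

theorem Submodule.finrank_comap_mkQ {F V : Type*} [Field F] [AddCommGroup V] [Module F V]
    [FiniteDimensional F V] (S : Submodule F V) (U : Submodule F (V ⧸ S)) :
    Module.finrank F (U.comap S.mkQ) = Module.finrank F S + Module.finrank F U := by
  have e := Submodule.quotientQuotientEquivQuotient S (U.comap S.mkQ) (le_comap_mkQ S U)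
  rw [Submodule.map_comap_eq_of_surjective S.mkQ_surjective] at e
  have h₁ := e.finrank_eq
  have h₂ := Submodule.finrank_quotient_add_finrank U
  have h₃ := Submodule.finrank_quotient_add_finrank S
  have h₄ := Submodule.finrank_quotient_add_finrank (U.comap S.mkQ)
  omega

section MultisetOfPoints

variable {F V : Type*} [Field F] [AddCommGroup V] [Module F V]

theorem MVal_eq_sum [Fintype (ℙ F V)] (M : ℙ F V → ℕ) (K : Submodule F V) :
    MVal M K = ∑ P, if P.submodule ≤ K then M P else 0 := by
  rw [MVal, finsum_mem_eq_finite_toFinset_sum _ (Set.toFinite _), ← Finset.sum_filter]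
  congr 1
  ext P
  simp

theorem MVal_restrict_of_le (M : ℙ F V → ℕ) {S H : Submodule F V} (hSH : S ≤ H) :
    MVal (fun P => if P.submodule ≤ H then M P else 0) S = MVal M S :=
  finsum_mem_congr rfl fun _ hP => if_pos (le_trans hP hSH)

/-- A point of `S` lies on every subspace `ℓ.comap S.mkQ`, any other point on exactly one. -/
theorem sum_MVal_comap_mkQ_add [Finite V] (M : ℙ F V → ℕ) (S : Submodule F V) :
    ∑ᶠ ℓ : ℙ F (V ⧸ S), MVal M (ℓ.submodule.comap S.mkQ) + MVal M S
      = Nat.card (ℙ F (V ⧸ S)) * MVal M S + MVal M ⊤ := by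
  have : Finite (V ⧸ S) := Finite.of_surjective _ S.mkQ_surjective
  have := Fintype.ofFinite (ℙ F V)
  have := Fintype.ofFinite (ℙ F (V ⧸ S))
  simp only [finsum_eq_sum_of_fintype, MVal_eq_sum, Nat.card_eq_fintype_card]
  rw [Finset.sum_comm, Finset.mul_sum, ← Finset.sum_add_distrib, ← Finset.sum_add_distrib]
  refine Finset.sum_congr rfl fun P _ => ?_
  by_cases hPS : P.submodule ≤ S
  · simp [hPS, le_trans hPS (Submodule.le_comap_mkQ S _)]
  · obtain ⟨ℓ₀, hℓ₀, huniq⟩ := Projectivization.existsUnique_le_comap_mkQ hPS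
    have hiff : ∀ ℓ, P.submodule ≤ ℓ.submodule.comap S.mkQ ↔ ℓ = ℓ₀ :=
      fun ℓ => ⟨huniq ℓ, fun h => h ▸ hℓ₀⟩
    simp [hiff, hPS]

theorem IsDivisible.modEq_of_finrank_add_two [Fintype F] [FiniteDimensional F V] {Δ : ℕ}
    {M : ℙ F V → ℕ} (hdiv : IsDivisible Δ M) (hqΔ : Fintype.card F ∣ Δ) {S : Submodule F V}
    (hS : Module.finrank F S + 2 = Module.finrank F V) :
    MVal M S ≡ MVal M ⊤ [MOD Δ / Fintype.card F] := by
  set q := Fintype.card F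
  have : Finite V := Module.finite_of_finite F
  have : Finite (V ⧸ S) := Finite.of_surjective _ S.mkQ_surjective
  have hquot : Module.finrank F (V ⧸ S) = 2 := by
    have := Submodule.finrank_quotient_add_finrank S
    omega
  have hN : Nat.card (ℙ F (V ⧸ S)) = q + 1 := by
    rw [Projectivization.card_of_finrank_two F _ hquot, Nat.card_eq_fintype_card]
  have hhyp : ∀ ℓ : ℙ F (V ⧸ S), MVal M (ℓ.submodule.comap S.mkQ) ≡ MVal M ⊤ [MOD Δ] :=
    fun ℓ => hdiv _ (by rw [Submodule.finrank_comap_mkQ, ℓ.finrank_submodule]; omega)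
  have hsum : ∑ᶠ ℓ : ℙ F (V ⧸ S), MVal M (ℓ.submodule.comap S.mkQ)
      ≡ (q + 1) * MVal M ⊤ [MOD Δ] := by
    have := Fintype.ofFinite (ℙ F (V ⧸ S))
    rw [finsum_eq_sum_of_fintype, ← hN, Nat.card_eq_fintype_card, ← smul_eq_mul,
      ← Finset.card_univ, ← Finset.sum_const]
    exact Nat.ModEq.sum fun ℓ _ => hhyp ℓ
  have hcount := sum_MVal_comap_mkQ_add M S
  rw [hN] at hcount
  have hq : q * MVal M S ≡ q * MVal M ⊤ [MOD Δ] := by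
    refine Nat.ModEq.add_right_cancel' (MVal M S + MVal M ⊤) ?_
    calc q * MVal M S + (MVal M S + MVal M ⊤)
        = ∑ᶠ ℓ : ℙ F (V ⧸ S), MVal M (ℓ.submodule.comap S.mkQ) + MVal M S := by
          rw [hcount]; ring
      _ ≡ (q + 1) * MVal M ⊤ + MVal M S [MOD Δ] := hsum.add_right _
      _ = q * MVal M ⊤ + (MVal M S + MVal M ⊤) := by ring
  rw [← Nat.mul_div_cancel' hqΔ] at hq
  exact Nat.ModEq.mul_left_cancel' Fintype.card_ne_zero hq

end MultisetOfPoints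

theorem stmt_0 {F : Type*} [Field F] [Fintype F] (q v Δ : ℕ)
    (hq : Fintype.card F = q) (hqΔ : q ∣ Δ)
    (M : Projectivization F (Fin v → F) → ℕ)
    (hdiv : IsDivisible Δ M)
    (H : Submodule F (Fin v → F)) (hH : Module.finrank F H + 1 = v) :
    ∀ S : Submodule F (Fin v → F), S ≤ H →
      Module.finrank F S + 1 = Module.finrank F H →
      MVal (fun P => if P.submodule ≤ H then M P else 0) S ≡ MVal M H [MOD Δ / q] := by
  intro S hSH hS
  subst hq
  have hV : Module.finrank F (Fin v → F) = v := Module.finrank_fin_fun F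
  rw [MVal_restrict_of_le M hSH]
  have hSV : MVal M S ≡ MVal M ⊤ [MOD Δ / Fintype.card F] :=
    hdiv.modEq_of_finrank_add_two hqΔ (by omega)
  have hHV : MVal M H ≡ MVal M ⊤ [MOD Δ / Fintype.card F] :=
    (hdiv H (by omega)).of_dvd (Nat.div_dvd_of_dvd hqΔ)
  exact hSV.trans hHV.symm
end

section
/- Let r ≥ 1 and let M be a 2^r-divisible multiset of points in PG(v-1,2) of cardinality 2^{r+1}. Then either M = 2^{r+1}·χ_P for a single point P, or there exist subspaces E ≤ K with r+1 ≥ dim(E) = dim(K)-1 ≥ 1 such that M = 2^{r+1-dim(E)}·(χ_K - χ_E), i.e., M is a suitable multiple of the characteristic function of an affine subspace K∖E. -/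
/-!
Identify the points of PG(v-1,2) with the nonzero vectors of 𝔽₂^v, so that `M` becomes a
function `m ≥ 0` on 𝔽₂^v with `m 0 = 0` and total mass `N = 2^(r+1)`. Its Walsh coefficient at
`y ≠ 0` is `2 m(y^⊥) - N`, so `2^r`-divisibility makes every coefficient a multiple of `N`; as it
is also at most `N` in absolute value, it is `N`, `0` or `-N`. The value `±N` is attained exactly
when `x ⬝ y` is constant (`0`, resp. `1`) on the support of `m`: the first set of such `y` is a
subspace `S`, the second a coset `g + S`, nonempty because the coefficients sum to `2^v m 0 = 0`.
Walsh inversion then shows that `m` is constant on `{x ∈ S^⊥ | x ⬝ g = 1} = K \ E` and vanishes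
elsewhere; counting gives the constant `2^(r+1-dim E)`, and `dim E = 0` is the single point case.
-/

open scoped Classical

open Finset Matrix Module
open scoped LinearAlgebra.Projectivization

lemma ZMod.eq_zero_or_eq_one (a : ZMod 2) : a = 0 ∨ a = 1 :=
  (em _).imp_right (Fin.eq_one_of_ne_zero a)

lemma Int.eq_or_eq_zero_or_eq_neg_of_dvd_of_abs_le {a N : ℤ} (h : N ∣ a) (ha : |a| ≤ N) :
    a = N ∨ a = 0 ∨ a = -N := by
  obtain ⟨t, rfl⟩ := h
  rcases ((abs_nonneg _).trans ha).eq_or_lt with hN | hN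
  · simp [← hN]
  · have ht : |t| ≤ 1 :=
      (mul_le_iff_le_one_right hN).1 (by rwa [abs_mul, abs_of_pos hN] at ha)
    rcases abs_le.1 ht with ⟨h1, h2⟩
    interval_cases t <;> simp

lemma Nat.le_and_eq_pow_sub_of_mul_pow_eq {b c e n : ℕ} (hb : 1 < b) (h : c * b ^ e = b ^ n) :
    e ≤ n ∧ c = b ^ (n - e) := by
  have he : e ≤ n := (Nat.pow_dvd_pow_iff_le_right hb).1 (Dvd.intro_left c h)
  refine ⟨he, Nat.eq_of_mul_eq_mul_right (pow_pos (zero_lt_one.trans hb) e) ?_⟩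
  rw [h, ← pow_add, Nat.sub_add_cancel he]

lemma Submodule.finrank_inf_ker_add_one {K V : Type*} [Field K] [AddCommGroup V] [Module K V]
    {W : Submodule K V} [FiniteDimensional K W] {f : Module.Dual K V} {x : V} (hxW : x ∈ W)
    (hfx : f x ≠ 0) : finrank K ↥(W ⊓ LinearMap.ker f) + 1 = finrank K W := by
  have hf : f.domRestrict W ≠ 0 := fun h => hfx (by simpa using LinearMap.congr_fun h ⟨x, hxW⟩)
  rw [← Module.Dual.finrank_ker_add_one_of_ne_zero hf, LinearMap.ker_domRestrict,
    ← Submodule.finrank_map_subtype_eq, Submodule.map_comap_subtype]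

lemma Submodule.card_filter_mem_and_not_mem {F V : Type*} [Field F] [Fintype F]
    [AddCommGroup V] [Module F V] [Fintype V] {E K : Submodule F V} (hEK : E ≤ K) :
    #{x | x ∈ K ∧ x ∉ E} = Fintype.card F ^ finrank F K - Fintype.card F ^ finrank F E := by
  have hcard (W : Submodule F V) : #{x | x ∈ W} = Fintype.card F ^ finrank F W := by
    rw [← Module.card_eq_pow_finrank, Fintype.card_subtype]
  rw [filter_and_not, card_sdiff_of_subset, hcard, hcard]
  intro x
  simpa using fun hx => hEK hx

def dotOrth {R ι : Type*} [CommSemiring R] [Fintype ι] (X : Set (ι → R)) :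
    Submodule R (ι → R) where
  carrier := {y | ∀ x ∈ X, x ⬝ᵥ y = 0}
  add_mem' ha hb x hx := by rw [dotProduct_add, ha x hx, hb x hx, add_zero]
  zero_mem' x _ := dotProduct_zero x
  smul_mem' c y hy x hx := by rw [dotProduct_smul, hy x hx, smul_zero]

lemma mem_dotOrth {R ι : Type*} [CommSemiring R] [Fintype ι] {X : Set (ι → R)}
    {y : ι → R} : y ∈ dotOrth X ↔ ∀ x ∈ X, x ⬝ᵥ y = 0 := Iff.rfl

namespace Projectivization

section DivisionRing

variable {K V : Type*} [DivisionRing K] [AddCommGroup V] [Module K V]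

lemma submodule_le_iff_rep_mem {P : ℙ K V} {W : Submodule K V} :
    P.submodule ≤ W ↔ P.rep ∈ W := by
  rw [submodule_eq, Submodule.span_singleton_le_iff_mem]

lemma submodule_ne_bot (P : ℙ K V) : P.submodule ≠ ⊥ := fun h =>
  one_ne_zero (P.finrank_submodule.symm.trans (Submodule.finrank_eq_zero.2 h))

lemma submodule_le_submodule_iff {P Q : ℙ K V} : P.submodule ≤ Q.submodule ↔ P = Q := by
  refine ⟨fun h => submodule_injective ?_, fun h => h ▸ le_rfl⟩
  exact Submodule.eq_of_le_of_finrank_eq h (by rw [finrank_submodule, finrank_submodule])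

end DivisionRing

section ZModTwo

variable {V : Type*} [AddCommGroup V] [Module (ZMod 2) V]

lemma mk_eq_mk_iff_of_zmod_two {x y : V} (hx : x ≠ 0) (hy : y ≠ 0) :
    mk (ZMod 2) x hx = mk (ZMod 2) y hy ↔ x = y := by
  rw [mk_eq_mk_iff, Unique.exists_iff, Subsingleton.elim (default : (ZMod 2)ˣ) 1, one_smul,
    eq_comm]

lemma rep_mk_of_zmod_two {x : V} (hx : x ≠ 0) : (mk (ZMod 2) x hx).rep = x :=
  (mk_eq_mk_iff_of_zmod_two (rep_nonzero _) hx).1 (mk_rep _)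

noncomputable def equivNeZeroOfZModTwo : {x : V // x ≠ 0} ≃ ℙ (ZMod 2) V where
  toFun x := mk (ZMod 2) x x.2
  invFun P := ⟨P.rep, P.rep_nonzero⟩
  left_inv x := Subtype.ext (rep_mk_of_zmod_two x.2)
  right_inv P := mk_rep P

/-- Over `ZMod 2` a point is the same as a nonzero vector, so a multiset of points becomes a
function on vectors vanishing at `0`. -/
noncomputable def vecMult (M : ℙ (ZMod 2) V → ℕ) (x : V) : ℕ :=
  if hx : x = 0 then 0 else M (mk (ZMod 2) x hx)

@[simp] lemma vecMult_zero (M : ℙ (ZMod 2) V → ℕ) : vecMult M 0 = 0 := dif_pos rfl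

lemma vecMult_rep (M : ℙ (ZMod 2) V → ℕ) (P : ℙ (ZMod 2) V) : vecMult M P.rep = M P := by
  rw [vecMult, dif_neg P.rep_nonzero, mk_rep]

lemma MVal_eq_sum_vecMult [Fintype V] (M : ℙ (ZMod 2) V → ℕ) (W : Submodule (ZMod 2) V) :
    MVal M W = ∑ x with x ∈ W, vecMult M x := by
  have : Fintype (ℙ (ZMod 2) V) := Fintype.ofFinite _
  have hsub (f : V → ℕ) (hf : f 0 = 0) : ∑ x : {x : V // x ≠ 0}, f x = ∑ x, f x := by
    rw [← sum_subtype _ fun x => mem_filter_univ (p := (· ≠ 0)) x]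
    exact sum_filter_of_ne fun x _ hx h => hx (h ▸ hf)
  rw [MVal, finsum_mem_eq_toFinset_sum, Set.toFinset_ofPred, sum_filter, sum_filter,
    ← Equiv.sum_comp equivNeZeroOfZModTwo, ← hsub _ (by simp)]
  refine Fintype.sum_congr _ _ fun x => ?_
  simp [equivNeZeroOfZModTwo, vecMult, x.2]

end ZModTwo

end Projectivization

namespace Walsh

def chi : AddChar (ZMod 2) ℤ := AddChar.zmodChar 2 (by norm_num : (-1 : ℤ) ^ 2 = 1)

@[simp] lemma chi_zero : chi 0 = 1 := AddChar.map_zero_eq_one _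

@[simp] lemma chi_one : chi 1 = -1 := by
  rw [chi, AddChar.zmodChar_apply, ZMod.val_one, pow_one]

lemma chi_eq_one_iff {a : ZMod 2} : chi a = 1 ↔ a = 0 := by
  rcases a.eq_zero_or_eq_one with rfl | rfl <;> simp

lemma chi_mul_self (a : ZMod 2) : chi a * chi a = 1 := by
  rcases a.eq_zero_or_eq_one with rfl | rfl <;> simp

lemma chi_eq_ite (a : ZMod 2) : chi a = 2 * (if a = 0 then 1 else 0) - 1 := by
  rcases a.eq_zero_or_eq_one with rfl | rfl <;> simp

lemma abs_chi (a : ZMod 2) : |chi a| = 1 := by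
  rcases a.eq_zero_or_eq_one with rfl | rfl <;> simp

lemma sum_chi_comp {G : Type*} [AddGroup G] [Fintype G] (f : G →+ ZMod 2) :
    ∑ g, chi (f g) = if f = 0 then (Fintype.card G : ℤ) else 0 := by
  have hf : chi.compAddMonoidHom f = 0 ↔ f = 0 := by
    rw [AddChar.eq_zero_iff, DFunLike.ext_iff]
    simp only [AddChar.compAddMonoidHom_apply, chi_eq_one_iff, AddMonoidHom.zero_apply]
  simpa only [AddChar.compAddMonoidHom_apply, hf] using
    AddChar.sum_eq_ite (chi.compAddMonoidHom f)

variable {ι : Type*} [Fintype ι]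

lemma sum_chi_dotProduct (x : ι → ZMod 2) :
    ∑ y, chi (x ⬝ᵥ y) = if x = 0 then (2 : ℤ) ^ Fintype.card ι else 0 := by
  have hf : AddMonoidHom.mk' (x ⬝ᵥ ·) (dotProduct_add x) = 0 ↔ x = 0 := by
    rw [← dotProduct_eq_zero_iff, DFunLike.ext_iff]; rfl
  simpa [hf] using sum_chi_comp (AddMonoidHom.mk' (x ⬝ᵥ ·) (dotProduct_add x))

lemma sum_chi_dotProduct_submodule (S : Submodule (ZMod 2) (ι → ZMod 2)) (x : ι → ZMod 2) :
    ∑ y with y ∈ S, chi (x ⬝ᵥ y) = if x ∈ dotOrth S then (#{y | y ∈ S} : ℤ) else 0 := by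
  let f : S →+ ZMod 2 := AddMonoidHom.mk' (fun y => x ⬝ᵥ y) fun a b => dotProduct_add x a b
  have hf : f = 0 ↔ x ∈ dotOrth S := by
    simp [f, mem_dotOrth, DFunLike.ext_iff, dotProduct_comm x]
  rw [sum_subtype _ (fun _ => mem_filter_univ _), ← Fintype.card_subtype]
  simp only [← hf]
  exact sum_chi_comp f

noncomputable def walsh (m : (ι → ZMod 2) → ℤ) (y : ι → ZMod 2) : ℤ :=
  ∑ x, chi (x ⬝ᵥ y) * m x

variable (m : (ι → ZMod 2) → ℤ)

lemma walsh_zero : walsh m 0 = ∑ x, m x := by simp [walsh]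

lemma sum_chi_mul_walsh (x : ι → ZMod 2) :
    ∑ y, chi (x ⬝ᵥ y) * walsh m y = 2 ^ Fintype.card ι * m x := by
  have hchi (y z : ι → ZMod 2) : chi (x ⬝ᵥ y) * chi (z ⬝ᵥ y) = chi ((x + z) ⬝ᵥ y) := by
    rw [add_dotProduct, AddChar.map_add_eq_mul]
  have hxz (z : ι → ZMod 2) : x + z = 0 ↔ z = x := by
    rw [add_eq_zero_iff_eq_neg, ZModModule.neg_eq_self, eq_comm]
  simp_rw [walsh, mul_sum, ← mul_assoc, hchi]
  rw [sum_comm]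
  simp_rw [← sum_mul, sum_chi_dotProduct, hxz, ite_mul, zero_mul, sum_ite_eq', mem_univ, if_true]

lemma sum_walsh_eq_zero (hm0 : m 0 = 0) : ∑ y, walsh m y = 0 := by
  simpa [hm0] using sum_chi_mul_walsh m 0

lemma walsh_eq_two_mul_sub (y : ι → ZMod 2) :
    walsh m y = 2 * ∑ x with x ⬝ᵥ y = 0, m x - ∑ x, m x := by
  simp only [walsh, chi_eq_ite, sub_mul, sum_sub_distrib, mul_assoc, ← mul_sum, ite_mul,
    one_mul, zero_mul, sum_ite, sum_const_zero, add_zero]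

variable {m}

lemma abs_walsh_le (hm : ∀ x, 0 ≤ m x) (y : ι → ZMod 2) : |walsh m y| ≤ ∑ x, m x :=
  (abs_sum_le_sum_abs _ _).trans_eq <| sum_congr rfl fun x _ => by
    rw [abs_mul, abs_chi, one_mul, abs_of_nonneg (hm x)]

lemma walsh_eq_chi_mul_sum_iff (hm : ∀ x, 0 ≤ m x) (b : ZMod 2) (y : ι → ZMod 2) :
    walsh m y = chi b * ∑ x, m x ↔ ∀ x, m x ≠ 0 → x ⬝ᵥ y = b := by
  have hdefect : (chi b * ∑ x, m x - walsh m y) * chi b =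
      ∑ x, (1 - chi (x ⬝ᵥ y + b)) * m x := by
    simp only [walsh, mul_comm _ (chi b), mul_sub, mul_sum, sub_mul, ← mul_assoc,
      AddChar.map_add_eq_mul, chi_mul_self, one_mul, sum_sub_distrib]
  have hterm (x : ι → ZMod 2) : 0 ≤ (1 - chi (x ⬝ᵥ y + b)) * m x :=
    mul_nonneg (sub_nonneg.2 (abs_le.1 (abs_chi _).le).2) (hm x)
  have hterm_eq (x : ι → ZMod 2) :
      (1 - chi (x ⬝ᵥ y + b)) * m x = 0 ↔ (m x ≠ 0 → x ⬝ᵥ y = b) := by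
    rw [mul_eq_zero, sub_eq_zero, eq_comm, chi_eq_one_iff, CharTwo.add_eq_zero,
      or_iff_not_imp_right]
  have hchi : chi b ≠ 0 := by rcases b.eq_zero_or_eq_one with rfl | rfl <;> simp
  rw [eq_comm, ← sub_eq_zero, ← mul_eq_zero_iff_right hchi, hdefect,
    sum_eq_zero_iff_of_nonneg fun x _ => hterm x]
  simp only [mem_univ, true_implies, hterm_eq]

lemma exists_walsh_eq_neg (hm0 : m 0 = 0) (hpos : 0 < ∑ x, m x)
    (htri : ∀ y, walsh m y = ∑ x, m x ∨ walsh m y = 0 ∨ walsh m y = -∑ x, m x) :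
    ∃ g, walsh m g = -∑ x, m x := by
  by_contra! h
  have hnonneg (y : ι → ZMod 2) : 0 ≤ walsh m y := by
    rcases htri y with h' | h' | h'
    · exact h' ▸ hpos.le
    · exact h'.ge
    · exact absurd h' (h y)
  have := (sum_eq_zero_iff_of_nonneg fun y _ => hnonneg y).1 (sum_walsh_eq_zero m hm0) 0
    (mem_univ _)
  rw [walsh_zero] at this
  exact hpos.ne' this

lemma walsh_eq_mul_sub_of_trichotomy (hm : ∀ x, 0 ≤ m x) (hpos : 0 < ∑ x, m x)
    (htri : ∀ y, walsh m y = ∑ x, m x ∨ walsh m y = 0 ∨ walsh m y = -∑ x, m x)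
    {g : ι → ZMod 2} (hg : ∀ x, m x ≠ 0 → x ⬝ᵥ g = 1) (y : ι → ZMod 2) :
    walsh m y = (∑ x, m x) * ((if y ∈ dotOrth (Function.support m) then 1 else 0) -
      (if y + g ∈ dotOrth (Function.support m) then 1 else 0)) := by
  have hS : walsh m y = ∑ x, m x ↔ y ∈ dotOrth (Function.support m) := by
    simpa [mem_dotOrth] using walsh_eq_chi_mul_sum_iff hm 0 y
  have hT : walsh m y = -∑ x, m x ↔ y + g ∈ dotOrth (Function.support m) := by
    rw [← neg_one_mul, ← chi_one, walsh_eq_chi_mul_sum_iff hm, mem_dotOrth]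
    refine forall₂_congr fun x hx => ?_
    rw [dotProduct_add, hg x hx, CharTwo.add_eq_zero]
  rw [← hS, ← hT]
  rcases htri y with h | h | h <;>
    simp [h, hpos.ne', CharZero.neg_eq_self_iff, CharZero.eq_neg_self_iff]

lemma two_pow_mul_eq_of_walsh_eq {S : Set (ι → ZMod 2)} {N : ℤ} {g : ι → ZMod 2}
    (hw : ∀ y, walsh m y = N * ((if y ∈ S then 1 else 0) - (if y + g ∈ S then 1 else 0)))
    (x : ι → ZMod 2) :
    2 ^ Fintype.card ι * m x = N * (1 - chi (x ⬝ᵥ g)) * ∑ y with y ∈ S, chi (x ⬝ᵥ y) := by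
  have htranslate : ∑ y, chi (x ⬝ᵥ y) * (if y + g ∈ S then 1 else 0) =
      chi (x ⬝ᵥ g) * ∑ y with y ∈ S, chi (x ⬝ᵥ y) := by
    rw [← Equiv.sum_comp (Equiv.addRight g)]
    simp [add_assoc, ZModModule.add_self, dotProduct_add, AddChar.map_add_eq_mul, mul_sum,
      sum_filter, mul_comm]
  rw [← sum_chi_mul_walsh]
  simp only [hw, mul_sub, sum_sub_distrib, mul_left_comm _ N, ← mul_sum, htranslate]
  simp [sum_filter]
  ring

theorem exists_eq_ite_of_dvd_walsh (hm : ∀ x, 0 ≤ m x) (hm0 : m 0 = 0) {x₀ : ι → ZMod 2}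
    (hx₀ : m x₀ ≠ 0) (hdvd : ∀ y, (∑ x, m x) ∣ walsh m y) :
    ∃ (K : Submodule (ZMod 2) (ι → ZMod 2)) (g : ι → ZMod 2), x₀ ∈ K ∧ x₀ ⬝ᵥ g = 1 ∧
      ∀ x, m x = if x ∈ K ∧ x ⬝ᵥ g = 1 then m x₀ else 0 := by
  have hpos : 0 < ∑ x, m x :=
    ((hm x₀).lt_of_ne' hx₀).trans_le (single_le_sum (fun x _ => hm x) (mem_univ x₀))
  have htri (y : ι → ZMod 2) :=
    Int.eq_or_eq_zero_or_eq_neg_of_dvd_of_abs_le (hdvd y) (abs_walsh_le hm y)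
  obtain ⟨g, hg⟩ := exists_walsh_eq_neg hm0 hpos htri
  replace hg : ∀ x, m x ≠ 0 → x ⬝ᵥ g = 1 :=
    (walsh_eq_chi_mul_sum_iff hm 1 g).1 (by rw [hg, chi_one, neg_one_mul])
  set K := dotOrth (dotOrth (Function.support m) : Set (ι → ZMod 2))
  have hinv (x : ι → ZMod 2) : 2 ^ Fintype.card ι * m x = (∑ x, m x) * (1 - chi (x ⬝ᵥ g)) *
      if x ∈ K then (#{y | y ∈ dotOrth (Function.support m)} : ℤ) else 0 := by
    rw [two_pow_mul_eq_of_walsh_eq (walsh_eq_mul_sub_of_trichotomy hm hpos htri hg) x]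
    simp only [SetLike.mem_coe]
    rw [sum_chi_dotProduct_submodule]
  have hx₀K : x₀ ∈ K := by
    by_contra h
    simpa [h, hx₀] using hinv x₀
  refine ⟨K, g, hx₀K, hg x₀ hx₀, fun x => ?_⟩
  refine mul_left_cancel₀ (pow_ne_zero (Fintype.card ι) (two_ne_zero (α := ℤ))) ?_
  by_cases hx : x ∈ K ∧ x ⬝ᵥ g = 1
  · rw [if_pos hx, hinv x, hinv x₀, hx.2, hg x₀ hx₀, if_pos hx.1, if_pos hx₀K]
  · rw [if_neg hx, hinv x, mul_zero]
    rcases (x ⬝ᵥ g).eq_zero_or_eq_one with h | h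
    · simp [h]
    · simp [h, show x ∉ K from fun hK => hx ⟨hK, h⟩]

end Walsh

open Walsh Projectivization

section IsDivisible

variable {ι : Type*} [Fintype ι]

lemma IsDivisible.walsh_vecMult_modEq {Δ : ℕ} {M : ℙ (ZMod 2) (ι → ZMod 2) → ℕ}
    (hdiv : IsDivisible Δ M) (y : ι → ZMod 2) :
    walsh (fun x => (vecMult M x : ℤ)) y ≡ MVal M ⊤ [ZMOD 2 * Δ] := by
  have htop : (MVal M ⊤ : ℤ) = ∑ x, (vecMult M x : ℤ) := by
    simp [MVal_eq_sum_vecMult]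
  rcases eq_or_ne y 0 with rfl | hy
  · rw [walsh_zero, htop]
  let f : Module.Dual (ZMod 2) (ι → ZMod 2) := dotProductBilin (ZMod 2) (ZMod 2) y
  have hf : f ≠ 0 := fun h => hy (dotProduct_eq_zero y fun x => LinearMap.congr_fun h x)
  have hH : MVal M (LinearMap.ker f) ≡ MVal M ⊤ [ZMOD Δ] :=
    Int.natCast_modEq_iff.2 <| hdiv _ <| by rw [f.finrank_ker_add_one_of_ne_zero hf]
  have hker : (MVal M (LinearMap.ker f) : ℤ) = ∑ x with x ⬝ᵥ y = 0, (vecMult M x : ℤ) := by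
    simp [MVal_eq_sum_vecMult, f, dotProduct_comm y]
  rw [walsh_eq_two_mul_sub, ← hker, ← htop]
  convert (hH.mul_left' (c := 2)).sub_right (MVal M ⊤ : ℤ) using 1
  ring

theorem IsDivisible.exists_eq_ite_affine {Δ : ℕ} {M : ℙ (ZMod 2) (ι → ZMod 2) → ℕ}
    (hdiv : IsDivisible Δ M) (hcard : MVal M ⊤ = 2 * Δ) (hΔ : Δ ≠ 0) :
    ∃ (E K : Submodule (ZMod 2) (ι → ZMod 2)) (c : ℕ), E ≤ K ∧
      finrank (ZMod 2) E + 1 = finrank (ZMod 2) K ∧ c * 2 ^ finrank (ZMod 2) E = 2 * Δ ∧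
      ∀ P, M P = if P.submodule ≤ K ∧ ¬ P.submodule ≤ E then c else 0 := by
  have htotal : ∑ x, (vecMult M x : ℤ) = 2 * Δ := by
    simpa [MVal_eq_sum_vecMult] using congrArg (Nat.cast (R := ℤ)) hcard
  obtain ⟨x₀, hx₀⟩ : ∃ x₀, (vecMult M x₀ : ℤ) ≠ 0 := by
    by_contra! h
    simp [h, hΔ] at htotal
  have hdvd (y : ι → ZMod 2) :
      ∑ x, (vecMult M x : ℤ) ∣ walsh (fun x => (vecMult M x : ℤ)) y := by
    rw [htotal, ← Int.modEq_zero_iff_dvd]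
    refine (hdiv.walsh_vecMult_modEq y).trans ?_
    rw [hcard, Int.modEq_zero_iff_dvd]
    push_cast
    rfl
  obtain ⟨K, g, hx₀K, hx₀g, hm⟩ :=
    exists_eq_ite_of_dvd_walsh (fun x => Int.natCast_nonneg _) (by simp) hx₀ hdvd
  let f : Module.Dual (ZMod 2) (ι → ZMod 2) := dotProductBilin (ZMod 2) (ZMod 2) g
  set E := K ⊓ LinearMap.ker f
  have hmem (x : ι → ZMod 2) : x ∈ K ∧ x ⬝ᵥ g = 1 ↔ x ∈ K ∧ x ∉ E := by
    rcases (x ⬝ᵥ g).eq_zero_or_eq_one with h | h <;> simp [E, f, dotProduct_comm g, h]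
  have hvec (x : ι → ZMod 2) : vecMult M x = if x ∈ K ∧ x ∉ E then vecMult M x₀ else 0 := by
    have := hm x
    simp only [hmem] at this
    exact_mod_cast this
  have hrank : finrank (ZMod 2) E + 1 = finrank (ZMod 2) K :=
    Submodule.finrank_inf_ker_add_one hx₀K (by simp [f, dotProduct_comm g, hx₀g])
  refine ⟨E, K, vecMult M x₀, inf_le_left, hrank, ?_, fun P => ?_⟩
  · have hcount : ∑ x, vecMult M x = vecMult M x₀ * #{x | x ∈ K ∧ x ∉ E} := by
      rw [sum_congr rfl fun x _ => hvec x, sum_ite, sum_const_zero, add_zero, sum_const,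
        smul_eq_mul, mul_comm]
    have hcardKE := Submodule.card_filter_mem_and_not_mem (inf_le_left : E ≤ K)
    rw [ZMod.card, ← hrank, pow_succ, mul_two, Nat.add_sub_cancel] at hcardKE
    rw [← hcard, MVal_eq_sum_vecMult, ← hcardKE, ← hcount]
    simp
  · rw [← vecMult_rep M P, hvec, submodule_le_iff_rep_mem, submodule_le_iff_rep_mem]

end IsDivisible

theorem stmt_4_general (v r : ℕ)
    (M : Projectivization (ZMod 2) (Fin v → ZMod 2) → ℕ)
    (hdiv : IsDivisible (2 ^ r) M)
    (hcard : MVal M ⊤ = 2 ^ (r + 1)) :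
    (∃ P, ∀ Q, M Q = if Q = P then 2 ^ (r + 1) else 0) ∨
    (∃ E K : Submodule (ZMod 2) (Fin v → ZMod 2), E ≤ K ∧
      Module.finrank (ZMod 2) E + 1 = Module.finrank (ZMod 2) K ∧
      1 ≤ Module.finrank (ZMod 2) E ∧ Module.finrank (ZMod 2) E ≤ r + 1 ∧
      ∀ P, M P = if P.submodule ≤ K ∧ ¬ P.submodule ≤ E
        then 2 ^ (r + 1 - Module.finrank (ZMod 2) E) else 0) := by
  obtain ⟨E, K, c, hEK, hrank, hc, hM⟩ :=
    hdiv.exists_eq_ite_affine (by rw [hcard, pow_succ, mul_comm]) (by positivity)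
  obtain ⟨he, rfl⟩ := Nat.le_and_eq_pow_sub_of_mul_pow_eq (n := r + 1) one_lt_two
    (hc.trans (by ring))
  rcases Nat.eq_zero_or_pos (finrank (ZMod 2) E) with he0 | he0
  · left
    obtain rfl : E = ⊥ := Submodule.finrank_eq_zero.1 he0
    refine ⟨mk'' K (by omega), fun Q => ?_⟩
    rw [hM Q, he0, ← submodule_le_submodule_iff, submodule_mk'']
    simp [submodule_ne_bot]
  · exact Or.inr ⟨E, K, hEK, hrank, he0, he, hM⟩

theorem stmt_4 (v r : ℕ) (hr : 1 ≤ r)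
    (M : Projectivization (ZMod 2) (Fin v → ZMod 2) → ℕ)
    (hdiv : IsDivisible (2 ^ r) M)
    (hcard : MVal M ⊤ = 2 ^ (r + 1)) :
    (∃ P, ∀ Q, M Q = if Q = P then 2 ^ (r + 1) else 0) ∨
    (∃ E K : Submodule (ZMod 2) (Fin v → ZMod 2), E ≤ K ∧
      Module.finrank (ZMod 2) E + 1 = Module.finrank (ZMod 2) K ∧
      1 ≤ Module.finrank (ZMod 2) E ∧ Module.finrank (ZMod 2) E ≤ r + 1 ∧
      ∀ P, M P = if P.submodule ≤ K ∧ ¬ P.submodule ≤ E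
        then 2 ^ (r + 1 - Module.finrank (ZMod 2) E) else 0) :=
  stmt_4_general v r M hdiv hcard
end

section
/- Let M be a 2-divisible (even) multiset of points in PG(v-1,2) of cardinality 5. Then either M = χ_L + 2·χ_P for a line L and a point P, or M is the characteristic function of a projective base of size 5, i.e., a set of 5 points in a 4-dimensional space such that every 4 of them are linearly independent. -/
open scoped Classical

/-!
Let `S` be the set of points of odd multiplicity. Pairing `∑ M(P) • P` with a nonzero functional
`φ` counts, mod 2, the weight off the hyperplane `ker φ`, which is even by divisibility; so the
vectors of `S` sum to zero. As `|S| ≡ |M| = 5 (mod 2)` and no one or two points sum to zero,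
either `|S| = 3`, `S = {a, b, a + b}` is a line and the remaining weight 2 sits on one point, or
`|S| = 5` and `M = χ_S`. In the latter case a vanishing sum over at most four points of `S` would
leave a vanishing sum over at most two on the complement, so every four points are independent.
-/

open Projectivization Module
open scoped LinearAlgebra.Projectivization

namespace Projectivization

noncomputable instance fintypeOfFinite {K V : Type*} [Field K] [Finite K] [AddCommGroup V]
    [Module K V] [Finite V] : Fintype (ℙ K V) :=
  Fintype.ofFinite _

variable {K V : Type*} [Field K] [AddCommGroup V] [Module K V]

theorem rep_injective : Function.Injective (Projectivization.rep : ℙ K V → V) := fun P Q h => by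
  rw [← P.mk_rep, ← Q.mk_rep, mk_eq_mk_iff']
  exact ⟨1, by rw [one_smul, h]⟩

theorem sum_rep_ne_zero_of_card_le_two {U : Finset (ℙ K V)} (hU : U.Nonempty)
    (h : U.card ≤ 2) : ∑ P ∈ U, P.rep ≠ 0 := by
  obtain h1 | h2 : U.card = 1 ∨ U.card = 2 := by have := hU.card_pos; omega
  · obtain ⟨a, rfl⟩ := Finset.card_eq_one.mp h1
    simpa using a.rep_nonzero
  · obtain ⟨a, b, hab, rfl⟩ := Finset.card_eq_two.mp h2
    rw [Finset.sum_pair hab, Ne, add_eq_zero_iff_eq_neg]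
    intro h
    apply hab
    rw [← a.mk_rep, ← b.mk_rep, mk_eq_mk_iff']
    exact ⟨-1, by rw [h, neg_one_smul]⟩

theorem sum_rep_ne_zero_of_ssubset {S U : Finset (ℙ K V)} (hS : S.card ≤ 5)
    (hsum : ∑ P ∈ S, P.rep = 0) (hU : U.Nonempty) (hUS : U ⊂ S) : ∑ P ∈ U, P.rep ≠ 0 := by
  by_cases hle : U.card ≤ 2
  · exact sum_rep_ne_zero_of_card_le_two hU hle
  have hcompl : (S \ U).card ≤ 2 := by
    rw [Finset.card_sdiff_of_subset hUS.subset]; omega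
  have hne := sum_rep_ne_zero_of_card_le_two (Finset.sdiff_nonempty.mpr
    (not_subset_of_ssubset hUS)) hcompl
  rwa [Finset.sum_sdiff_eq_sub hUS.subset, hsum, zero_sub, neg_ne_zero] at hne

theorem iSup_submodule_eq_span_range (T : Finset (ℙ K V)) :
    (⨆ P ∈ T, P.submodule) = Submodule.span K (Set.range fun P : T => P.1.rep) := by
  simp only [submodule_eq, ← Submodule.span_iUnion₂]
  congr 1
  ext x
  simp [eq_comm]

theorem finrank_iSup_submodule {T : Finset (ℙ K V)}
    (hT : LinearIndependent K fun P : T => P.1.rep) :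
    finrank K ↥(⨆ P ∈ T, P.submodule) = T.card := by
  rw [iSup_submodule_eq_span_range, finrank_span_eq_card hT, Fintype.card_coe]

end Projectivization

theorem ZMod.two_eq_zero_or_one (c : ZMod 2) : c = 0 ∨ c = 1 := by
  fin_cases c
  exacts [Or.inl rfl, Or.inr rfl]

section ZModTwo

variable {V : Type*} [AddCommGroup V] [Module (ZMod 2) V]

theorem linearIndependent_zmod_two_of_sum_ne_zero {ι : Type*} [Fintype ι] {f : ι → V}
    (h : ∀ U : Finset ι, U.Nonempty → ∑ i ∈ U, f i ≠ 0) : LinearIndependent (ZMod 2) f := by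
  rw [Fintype.linearIndependent_iff]
  intro g hg i
  have hg01 : ∀ j, g j • f j = if g j ≠ 0 then f j else 0 := fun j => by
    rcases ZMod.two_eq_zero_or_one (g j) with h | h <;> simp [h]
  by_contra hi
  refine h {j | g j ≠ 0} ⟨i, by simpa using hi⟩ ?_
  rw [Finset.sum_filter]
  simpa only [hg01] using hg

theorem linearIndependent_rep_of_ssubset_of_sum_eq_zero {S T : Finset (ℙ (ZMod 2) V)}
    (hS : S.card ≤ 5) (hsum : ∑ P ∈ S, P.rep = 0) (hTS : T ⊂ S) :
    LinearIndependent (ZMod 2) fun P : T => P.1.rep := by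
  refine linearIndependent_zmod_two_of_sum_ne_zero fun U hU => ?_
  have hUS : U.map (Function.Embedding.subtype (· ∈ T)) ⊂ S :=
    Finset.ssubset_of_subset_of_ssubset (Finset.map_subtype_subset U) hTS
  simpa using sum_rep_ne_zero_of_ssubset hS hsum hU.map hUS

theorem isProjBase_of_sum_rep_eq_zero {S : Finset (ℙ (ZMod 2) V)} (hS : S.card = 5)
    (hsum : ∑ P ∈ S, P.rep = 0) : IsProjBase 5 S := by
  refine ⟨hS, fun T hTS hT => ?_⟩
  rw [finrank_iSup_submodule
    (linearIndependent_rep_of_ssubset_of_sum_eq_zero hS.le hsum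
    (Finset.ssubset_iff_subset_ne.mpr ⟨hTS, by rintro rfl; omega⟩)), hT]

theorem mem_span_pair_iff_zmod_two {x y z : V} (hz : z ≠ 0) :
    z ∈ Submodule.span (ZMod 2) {x, y} ↔ z = x ∨ z = y ∨ z = x + y := by
  rw [Submodule.mem_span_pair]
  constructor
  · rintro ⟨s, t, rfl⟩
    rcases ZMod.two_eq_zero_or_one s with rfl | rfl <;>
      rcases ZMod.two_eq_zero_or_one t with rfl | rfl <;> simp_all
  · rintro (rfl | rfl | rfl)
    exacts [⟨1, 0, by simp⟩, ⟨0, 1, by simp⟩, ⟨1, 1, by simp⟩]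

theorem exists_line_of_sum_rep_eq_zero {S : Finset (ℙ (ZMod 2) V)} (hS : S.card = 3)
    (hsum : ∑ P ∈ S, P.rep = 0) :
    ∃ L : Submodule (ZMod 2) V, finrank (ZMod 2) L = 2 ∧
      ∀ Q : ℙ (ZMod 2) V, Q.submodule ≤ L ↔ Q ∈ S := by
  obtain ⟨a, b, c, hab, hac, hbc, rfl⟩ := Finset.card_eq_three.mp hS
  have hc : c.rep = a.rep + b.rep := by
    rw [Finset.sum_insert (by simp [hab, hac]), Finset.sum_pair hbc, ← add_assoc,
      add_eq_zero_iff_neg_eq, ZModModule.neg_eq_self] at hsum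
    exact hsum.symm
  refine ⟨Submodule.span (ZMod 2) {a.rep, b.rep}, ?_, fun Q => ?_⟩
  · have hind : LinearIndependent (ZMod 2) (Projectivization.rep ∘ ![a, b]) :=
      independent_iff.mp ((independent_pair_iff_ne a b).mpr hab)
    rw [← Set.image_pair, ← Matrix.range_cons_cons_empty a b ![], ← Set.range_comp,
      finrank_span_eq_card hind, Fintype.card_fin]
  · rw [submodule_eq, Submodule.span_singleton_le_iff_mem, mem_span_pair_iff_zmod_two Q.rep_nonzero,
      ← hc]
    simp only [Finset.mem_insert, Finset.mem_singleton, rep_injective.eq_iff]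

end ZModTwo

section Divisible

theorem mval_eq_sum_filter {K V : Type*} [Field K] [Finite K] [AddCommGroup V] [Module K V]
    [Finite V] (M : ℙ K V → ℕ) (W : Submodule K V) :
    MVal M W = ∑ P with P.submodule ≤ W, M P := by
  rw [MVal, finsum_mem_eq_finite_toFinset_sum _ (Set.toFinite _)]
  congr 1
  ext P
  simp

theorem mval_top {K V : Type*} [Field K] [Finite K] [AddCommGroup V] [Module K V]
    [Finite V] (M : ℙ K V → ℕ) : MVal M ⊤ = ∑ P, M P := by
  simp [mval_eq_sum_filter]

variable {V : Type*} [AddCommGroup V] [Module (ZMod 2) V] [Finite V]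

theorem sum_smul_rep_eq_zero_of_isDivisible {M : ℙ (ZMod 2) V → ℕ} (hdiv : IsDivisible 2 M) :
    ∑ P, (M P : ZMod 2) • P.rep = 0 := by
  refine (Module.forall_dual_apply_eq_zero_iff (ZMod 2) _).mp fun φ => ?_
  rcases eq_or_ne φ 0 with rfl | hφ
  · rfl
  have hmod := (ZMod.natCast_eq_natCast_iff _ _ _).mpr
    (hdiv _ (Module.Dual.finrank_ker_add_one_of_ne_zero hφ))
  rw [mval_top, mval_eq_sum_filter] at hmod
  simp only [submodule_eq, Submodule.span_singleton_le_iff_mem,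
    LinearMap.mem_ker, Nat.cast_sum] at hmod
  calc φ (∑ P, (M P : ZMod 2) • P.rep)
      = ∑ P, ((M P : ZMod 2) - if φ P.rep = 0 then (M P : ZMod 2) else 0) := by
        rw [map_sum]
        refine Finset.sum_congr rfl fun P _ => ?_
        rcases ZMod.two_eq_zero_or_one (φ P.rep) with h | h <;> simp [h]
    _ = 0 := by rw [Finset.sum_sub_distrib, ← Finset.sum_filter, hmod, sub_self]

end Divisible

section OddSupport

variable {α : Type*} [Fintype α]

def oddSupport (M : α → ℕ) : Finset α := {a | Odd (M a)}

theorem eq_ite_mem_oddSupport_add (M : α → ℕ) (a : α) :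
    M a = (if a ∈ oddSupport M then 1 else 0) + 2 * (M a / 2) := by
  simp only [oddSupport, Finset.mem_filter, Finset.mem_univ, true_and, Nat.odd_iff]
  split_ifs <;> omega

theorem card_oddSupport_add_two_mul_sum_div_two (M : α → ℕ) :
    (oddSupport M).card + 2 * ∑ a, M a / 2 = ∑ a, M a := by
  conv_rhs => rw [Finset.sum_congr rfl fun a _ => eq_ite_mem_oddSupport_add M a]
  rw [Finset.sum_add_distrib, Finset.sum_ite_mem, Finset.univ_inter, Finset.card_eq_sum_ones,
    Finset.mul_sum]

theorem exists_eq_ite_of_sum_eq_one {N : α → ℕ} (h : ∑ a, N a = 1) :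
    ∃ b, ∀ a, N a = if a = b then 1 else 0 := by
  obtain ⟨b, hb⟩ := (Finsupp.sum_eq_one_iff (Finsupp.equivFunOnFinite.symm N)).mp
    (by rwa [Finsupp.sum_fintype _ _ fun _ => rfl])
  refine ⟨b, fun a => ?_⟩
  simpa [Finsupp.single_apply, eq_comm] using congrArg (· a) hb

theorem sum_rep_oddSupport_eq_zero {V : Type*} [AddCommGroup V] [Module (ZMod 2) V] [Finite V]
    {M : ℙ (ZMod 2) V → ℕ} (hdiv : IsDivisible 2 M) : ∑ P ∈ oddSupport M, P.rep = 0 := by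
  rw [oddSupport, Finset.sum_filter]
  refine (Finset.sum_congr rfl fun P _ => ?_).trans (sum_smul_rep_eq_zero_of_isDivisible hdiv)
  split_ifs with h
  · rw [ZMod.natCast_eq_one_iff_odd.mpr h, one_smul]
  · rw [ZMod.natCast_eq_zero_iff_even.mpr (Nat.not_odd_iff_even.mp h), zero_smul]

end OddSupport

theorem stmt_5 (v : ℕ) (M : Projectivization (ZMod 2) (Fin v → ZMod 2) → ℕ)
    (hdiv : IsDivisible 2 M) (hcard : MVal M ⊤ = 5) :
    (∃ (L : Submodule (ZMod 2) (Fin v → ZMod 2))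
        (P : Projectivization (ZMod 2) (Fin v → ZMod 2)),
      Module.finrank (ZMod 2) L = 2 ∧
      ∀ Q, M Q = (if Q.submodule ≤ L then 1 else 0) + (if Q = P then 2 else 0)) ∨
    (∃ B : Finset (Projectivization (ZMod 2) (Fin v → ZMod 2)), IsProjBase 5 B ∧
      ∀ Q, M Q = if Q ∈ B then 1 else 0) := by
  have hsum := sum_rep_oddSupport_eq_zero hdiv
  have hsize := card_oddSupport_add_two_mul_sum_div_two M
  rw [← mval_top M, hcard] at hsize
  obtain h1 | h3 | h5 : (oddSupport M).card = 1 ∨ (oddSupport M).card = 3 ∨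
      (oddSupport M).card = 5 := by omega
  · exact absurd hsum (sum_rep_ne_zero_of_card_le_two (Finset.card_pos.mp (by omega)) (by omega))
  · obtain ⟨L, hL, hLS⟩ := exists_line_of_sum_rep_eq_zero h3 hsum
    obtain ⟨P, hP⟩ := exists_eq_ite_of_sum_eq_one (N := fun Q => M Q / 2) (by omega)
    refine Or.inl ⟨L, P, hL, fun Q => ?_⟩
    rw [eq_ite_mem_oddSupport_add M Q, hP Q, hLS]
    split_ifs <;> rfl
  · have hhalf : ∑ Q, M Q / 2 = 0 := by omega
    rw [Finset.sum_eq_zero_iff] at hhalf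
    refine Or.inr ⟨oddSupport M, isProjBase_of_sum_rep_eq_zero h5 hsum, fun Q => ?_⟩
    rw [eq_ite_mem_oddSupport_add M Q, hhalf Q (Finset.mem_univ Q), mul_zero, add_zero]
end

section
/- There is no 8-divisible multiset of points M in PG(v-1,2) of cardinality 22 all of whose point multiplicities are at most 7; that is, every 8-divisible multiset of points M in PG(v-1,2) of cardinality 22 has maximum point multiplicity at least 8. -/
open scoped Classical

namespace Stmt13Aux

open Finset

lemma zmod2_cases (a : ZMod 2) : a = 0 ∨ a = 1 := by revert a; decide

lemma zmod2_ne_zero : ∀ {a : ZMod 2}, a ≠ 0 → a = 1 := by decide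

lemma zmod2_add_self (a : ZMod 2) : a + a = 0 := by revert a; decide

lemma zmod2_add_eq_zero : ∀ {a b : ZMod 2}, a + b = 0 → b = a := by decide

variable {v : ℕ}

/-- dot product -/
def dt (c x : Fin v → ZMod 2) : ZMod 2 := ∑ i, c i * x i

lemma dt_add_right (c x y : Fin v → ZMod 2) : dt c (x + y) = dt c x + dt c y := by
  simp [dt, mul_add, Finset.sum_add_distrib]

lemma dt_add_left (c d x : Fin v → ZMod 2) : dt (c + d) x = dt c x + dt d x := by
  simp [dt, add_mul, Finset.sum_add_distrib]

lemma dt_zero_right (c : Fin v → ZMod 2) : dt c 0 = 0 := by simp [dt]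

lemma dt_zero_left (x : Fin v → ZMod 2) : dt 0 x = 0 := by simp [dt]

lemma dt_single (i : Fin v) (x : Fin v → ZMod 2) : dt (Pi.single i 1) x = x i := by
  rw [dt, Finset.sum_eq_single i]
  · simp
  · intro j _ hj
    simp [Pi.single_apply, hj]
  · simp

lemma wadd_self (x : Fin v → ZMod 2) : x + x = 0 :=
  funext fun i => zmod2_add_self (x i)

lemma wadd_eq_zero {x y : Fin v → ZMod 2} : x + y = 0 ↔ y = x := by
  constructor
  · intro h
    funext i
    exact zmod2_add_eq_zero (congrFun h i)
  · intro h
    subst h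
    exact wadd_self y

lemma wadd_add_self_left (u y : Fin v → ZMod 2) : u + y + u = y := by
  rw [add_right_comm, wadd_self, zero_add]

lemma wadd_add_self_right (u y : Fin v → ZMod 2) : u + y + y = u := by
  rw [add_assoc, wadd_self, add_zero]

/-- sign character -/
def ep (c x : Fin v → ZMod 2) : ℤ := if dt c x = 0 then 1 else -1

lemma ep_zero_right (c : Fin v → ZMod 2) : ep c 0 = 1 := by simp [ep, dt_zero_right]

lemma ep_zero_left (x : Fin v → ZMod 2) : ep 0 x = 1 := by simp [ep, dt_zero_left]

lemma ep_mul (c x y : Fin v → ZMod 2) : ep c x * ep c y = ep c (x + y) := by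
  rw [ep, ep, ep, dt_add_right]
  rcases zmod2_cases (dt c x) with h | h <;> rcases zmod2_cases (dt c y) with h' | h' <;>
    rw [h, h'] <;> simp [show (1 : ZMod 2) + 1 = 0 by decide, show (1 : ZMod 2) ≠ 0 by decide]

lemma cardW : Fintype.card (Fin v → ZMod 2) = 2 ^ v := by
  rw [Fintype.card_fun]
  simp

lemma sum_ep_ne {x : Fin v → ZMod 2} (hx : x ≠ 0) : ∑ c, ep c x = 0 := by
  obtain ⟨i, hi⟩ : ∃ i, x i ≠ 0 := by
    by_contra h
    push_neg at h
    exact hx (funext fun i => h i)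
  have hx1 : x i = 1 := zmod2_ne_zero hi
  have key : ∀ c, ep (c + Pi.single i 1) x = -ep c x := by
    intro c
    rw [ep, ep, dt_add_left, dt_single, hx1]
    rcases zmod2_cases (dt c x) with h | h <;> rw [h] <;>
      simp [show (1 : ZMod 2) + 1 = 0 by decide, show (1 : ZMod 2) ≠ 0 by decide, show (0:ZMod 2) + 1 = 1 by decide]
  have h2 : ∑ c, ep (c + Pi.single i 1) x = ∑ c, ep c x :=
    Fintype.sum_equiv (Equiv.addRight (Pi.single i 1)) _ _ (fun c => rfl)
  simp_rw [key] at h2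
  rw [Finset.sum_neg_distrib] at h2
  omega

lemma sum_ep_eq (x : Fin v → ZMod 2) :
    ∑ c, ep c x = if x = 0 then ((2 ^ v : ℕ) : ℤ) else 0 := by
  split
  · next h =>
    subst h
    simp [ep_zero_right, card_univ, cardW]
  · next h => exact sum_ep_ne h

section Identities

variable {v : ℕ} (m : (Fin v → ZMod 2) → ℕ)

lemma sum_ep_two (x y : Fin v → ZMod 2) :
    ∑ c, ep c x * ep c y = if y = x then ((2 ^ v : ℕ) : ℤ) else 0 := by
  simp_rw [ep_mul]
  rw [sum_ep_eq]
  simp only [wadd_eq_zero]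

lemma sum_ep_three (x y z : Fin v → ZMod 2) :
    ∑ c, ep c x * ep c y * ep c z = if z = x + y then ((2 ^ v : ℕ) : ℤ) else 0 := by
  simp_rw [ep_mul]
  rw [sum_ep_eq]
  have : x + y + z = 0 ↔ z = x + y := wadd_eq_zero
  simp only [this]

/-- The (integer) Fourier coefficient. -/
def Ff (c : Fin v → ZMod 2) : ℤ := ∑ x, (m x : ℤ) * ep c x

/-- Hyperplane sum. -/
def Mc (c : Fin v → ZMod 2) : ℕ := ∑ x, if dt c x = 0 then m x else 0

lemma Ff_eq_Mc (c : Fin v → ZMod 2) :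
    Ff m c = 2 * (Mc m c : ℤ) - ∑ x, (m x : ℤ) := by
  rw [Ff, Mc]
  have h1 : ∀ x : Fin v → ZMod 2,
      (m x : ℤ) * ep c x = 2 * (if dt c x = 0 then (m x : ℤ) else 0) - m x := by
    intro x; rw [ep]; split <;> ring
  simp_rw [h1]
  rw [Finset.sum_sub_distrib, ← Finset.mul_sum]
  push_cast
  rfl

lemma Ff_zero : Ff m 0 = ∑ x, (m x : ℤ) := by
  simp [Ff, ep_zero_left]

lemma idA (h0 : m 0 = 0) : ∑ c, Ff m c = 0 := by
  simp only [Ff]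
  rw [Finset.sum_comm]
  simp only [← Finset.mul_sum, sum_ep_eq, mul_ite, mul_zero]
  rw [Finset.sum_ite_eq' Finset.univ (0 : Fin v → ZMod 2)]
  simp [h0]

lemma idD (u : Fin v → ZMod 2) : ∑ c, ep c u * Ff m c = ((2 ^ v : ℕ) : ℤ) * m u := by
  calc ∑ c, ep c u * Ff m c
      = ∑ c, ∑ x, (m x : ℤ) * (ep c u * ep c x) := by
        refine Finset.sum_congr rfl fun c _ => ?_
        rw [Ff, Finset.mul_sum]
        exact Finset.sum_congr rfl fun x _ => by ring
    _ = ∑ x, (m x : ℤ) * ∑ c, ep c u * ep c x := by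
        rw [Finset.sum_comm]
        exact Finset.sum_congr rfl fun x _ => by rw [← Finset.mul_sum]
    _ = ∑ x, (m x : ℤ) * (if x = u then ((2 ^ v : ℕ) : ℤ) else 0) := by
        simp_rw [sum_ep_two]
    _ = ((2 ^ v : ℕ) : ℤ) * m u := by
        simp only [mul_ite, mul_zero]
        rw [Finset.sum_ite_eq' Finset.univ u]
        simp [mul_comm]

lemma idB : ∑ c, Ff m c ^ 2 = ((2 ^ v : ℕ) : ℤ) * ∑ x, (m x : ℤ) * m x := by
  calc ∑ c, Ff m c ^ 2
      = ∑ c, ∑ x, ∑ y, ((m x : ℤ) * m y) * (ep c x * ep c y) := by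
        refine Finset.sum_congr rfl fun c _ => ?_
        rw [sq, Ff, Finset.sum_mul_sum]
        exact Finset.sum_congr rfl fun x _ =>
          Finset.sum_congr rfl fun y _ => by ring
    _ = ∑ x, ∑ y, ((m x : ℤ) * m y) * ∑ c, ep c x * ep c y := by
        rw [Finset.sum_comm]
        refine Finset.sum_congr rfl fun x _ => ?_
        rw [Finset.sum_comm]
        exact Finset.sum_congr rfl fun y _ => by rw [← Finset.mul_sum]
    _ = ∑ x, ∑ y, ((m x : ℤ) * m y) * (if y = x then ((2 ^ v : ℕ) : ℤ) else 0) := by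
        simp_rw [sum_ep_two]
    _ = ∑ x, ((m x : ℤ) * m x) * ((2 ^ v : ℕ) : ℤ) := by
        refine Finset.sum_congr rfl fun x _ => ?_
        simp only [mul_ite, mul_zero]
        rw [Finset.sum_ite_eq' Finset.univ x]
        simp
    _ = ((2 ^ v : ℕ) : ℤ) * ∑ x, (m x : ℤ) * m x := by
        rw [Finset.mul_sum]
        exact Finset.sum_congr rfl fun x _ => by ring

lemma idBu (u : Fin v → ZMod 2) :
    ∑ c, ep c u * Ff m c ^ 2 = ((2 ^ v : ℕ) : ℤ) * ∑ x, (m x : ℤ) * m (u + x) := by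
  calc ∑ c, ep c u * Ff m c ^ 2
      = ∑ c, ∑ x, ∑ y, ((m x : ℤ) * m y) * (ep c u * ep c x * ep c y) := by
        refine Finset.sum_congr rfl fun c _ => ?_
        rw [sq, Ff, Finset.sum_mul_sum, Finset.mul_sum]
        refine Finset.sum_congr rfl fun x _ => ?_
        rw [Finset.mul_sum]
        exact Finset.sum_congr rfl fun y _ => by ring
    _ = ∑ x, ∑ y, ((m x : ℤ) * m y) * ∑ c, ep c u * ep c x * ep c y := by
        rw [Finset.sum_comm]
        refine Finset.sum_congr rfl fun x _ => ?_
        rw [Finset.sum_comm]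
        exact Finset.sum_congr rfl fun y _ => by rw [← Finset.mul_sum]
    _ = ∑ x, ∑ y, ((m x : ℤ) * m y) * (if y = u + x then ((2 ^ v : ℕ) : ℤ) else 0) := by
        simp_rw [sum_ep_three]
    _ = ∑ x, ((m x : ℤ) * m (u + x)) * ((2 ^ v : ℕ) : ℤ) := by
        refine Finset.sum_congr rfl fun x _ => ?_
        simp only [mul_ite, mul_zero]
        rw [Finset.sum_ite_eq' Finset.univ (u + x)]
        simp
    _ = ((2 ^ v : ℕ) : ℤ) * ∑ x, (m x : ℤ) * m (u + x) := by
        rw [Finset.mul_sum]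
        exact Finset.sum_congr rfl fun x _ => by ring

lemma idC : ∑ c, Ff m c ^ 3
    = ((2 ^ v : ℕ) : ℤ) * ∑ x, ∑ y, (m x : ℤ) * m y * m (x + y) := by
  calc ∑ c, Ff m c ^ 3
      = ∑ c, ∑ x, ∑ y, ∑ z, ((m x : ℤ) * m y * m z) * (ep c x * ep c y * ep c z) := by
        refine Finset.sum_congr rfl fun c _ => ?_
        rw [pow_succ, sq, Ff, Finset.sum_mul_sum, Finset.sum_mul]
        refine Finset.sum_congr rfl fun x _ => ?_
        rw [Finset.sum_mul]
        refine Finset.sum_congr rfl fun y _ => ?_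
        rw [Finset.mul_sum]
        exact Finset.sum_congr rfl fun z _ => by ring
    _ = ∑ x, ∑ y, ∑ z, ((m x : ℤ) * m y * m z) * ∑ c, ep c x * ep c y * ep c z := by
        rw [Finset.sum_comm]
        refine Finset.sum_congr rfl fun x _ => ?_
        rw [Finset.sum_comm]
        refine Finset.sum_congr rfl fun y _ => ?_
        rw [Finset.sum_comm]
        exact Finset.sum_congr rfl fun z _ => by rw [← Finset.mul_sum]
    _ = ∑ x, ∑ y, ∑ z, ((m x : ℤ) * m y * m z) * (if z = x + y then ((2 ^ v : ℕ) : ℤ) else 0) := by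
        simp_rw [sum_ep_three]
    _ = ∑ x, ∑ y, ((m x : ℤ) * m y * m (x + y)) * ((2 ^ v : ℕ) : ℤ) := by
        refine Finset.sum_congr rfl fun x _ => Finset.sum_congr rfl fun y _ => ?_
        simp only [mul_ite, mul_zero]
        rw [Finset.sum_ite_eq' Finset.univ (x + y)]
        simp
    _ = ((2 ^ v : ℕ) : ℤ) * ∑ x, ∑ y, (m x : ℤ) * m y * m (x + y) := by
        rw [Finset.mul_sum]
        refine Finset.sum_congr rfl fun x _ => ?_
        rw [Finset.mul_sum]
        exact Finset.sum_congr rfl fun y _ => by ring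

end Identities

section Span

variable {v : ℕ}

/-- Convolution value. -/
def Cv (m : (Fin v → ZMod 2) → ℕ) (u : Fin v → ZMod 2) : ℕ := ∑ x, m x * m (u + x)

theorem spanCase (m : (Fin v → ZMod 2) → ℕ) (h0 : m 0 = 0) (hb : ∀ x, m x ≤ 7)
    (ht : ∑ x, m x = 22)
    (hM : ∀ c, c ≠ 0 → Mc m c % 8 = 6)
    (hsp : ∀ c, c ≠ 0 → ∃ x, m x ≠ 0 ∧ dt c x ≠ 0) : False := by
  classical
  have htZ : ∑ x, (m x : ℤ) = 22 := by
    have := congrArg (fun n : ℕ => (n : ℤ)) ht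
    push_cast at this
    exact this
  -- values of hyperplane sums
  have hMv : ∀ c, c ≠ 0 → Mc m c = 6 ∨ Mc m c = 14 := by
    intro c hc
    have hle : Mc m c ≤ 22 := by
      rw [← ht, Mc]
      exact Finset.sum_le_sum fun x _ => by split <;> omega
    obtain ⟨x₀, hx₀m, hx₀d⟩ := hsp c hc
    have hlt : Mc m c + m x₀ ≤ 22 := by
      rw [← ht, Mc]
      have hsplit : ∑ x, (if dt c x = 0 then m x else 0) + m x₀
          = ∑ x, ((if dt c x = 0 then m x else 0) + (if x = x₀ then m x else 0)) := by
        rw [Finset.sum_add_distrib]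
        congr 1
        rw [Finset.sum_ite_eq' Finset.univ x₀]
        simp
      rw [hsplit]
      refine Finset.sum_le_sum fun x _ => ?_
      by_cases h1 : x = x₀
      · subst h1
        simp [if_neg hx₀d]
      · simp only [if_neg h1, add_zero]
        split <;> omega
    have := hM c hc
    omega
  have hq : ∀ c, c ≠ 0 → Ff m c ^ 2 + 4 * Ff m c - 60 = 0 := by
    intro c hc
    have hF : Ff m c = 2 * (Mc m c : ℤ) - 22 := by rw [Ff_eq_Mc, htZ]
    rcases hMv c hc with h | h <;> rw [hF, h] <;> norm_num
  have hF0 : Ff m 0 = 22 := by rw [Ff_zero, htZ]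
  have hsingle : ∀ g : (Fin v → ZMod 2) → ℤ,
      ∑ c, g c * (Ff m c ^ 2 + 4 * Ff m c - 60) = g 0 * 512 := by
    intro g
    rw [Finset.sum_eq_single_of_mem (0 : Fin v → ZMod 2) (Finset.mem_univ _)]
    · rw [hF0]; ring
    · intro c _ hc
      rw [hq c hc, mul_zero]
  have hcast1 : ((∑ x, m x * m x : ℕ) : ℤ) = ∑ x, (m x : ℤ) * m x := by push_cast; rfl
  have hcast2 : ∀ u, ((Cv m u : ℕ) : ℤ) = ∑ x, (m x : ℤ) * m (u + x) := by
    intro u; rw [Cv]; push_cast; rfl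
  have hcast3 : ((∑ x, ∑ y, m x * m y * m (x + y) : ℕ) : ℤ)
      = ∑ x, ∑ y, (m x : ℤ) * m y * m (x + y) := by push_cast; rfl
  have hsumconst : ∑ _c : Fin v → ZMod 2, (60 : ℤ) = ((2 ^ v : ℕ) : ℤ) * 60 := by
    rw [Finset.sum_const, Finset.card_univ, cardW, nsmul_eq_mul]
  -- equation 1 : second moment
  have e1 : 2 ^ v * (∑ x, m x * m x) = 60 * 2 ^ v + 512 := by
    have h := hsingle (fun _ => 1)
    simp only [one_mul] at h
    rw [Finset.sum_sub_distrib, Finset.sum_add_distrib, ← Finset.mul_sum,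
      idA m h0, idB, hsumconst, mul_zero, add_zero] at h
    have hZ : ((2 ^ v : ℕ) : ℤ) * ((∑ x, m x * m x : ℕ) : ℤ)
        = 60 * ((2 ^ v : ℕ) : ℤ) + 512 := by rw [hcast1]; linarith
    exact_mod_cast hZ
  -- equation 2 : pointwise convolution identity
  have e2 : ∀ u : Fin v → ZMod 2, u ≠ 0 → 2 ^ v * (Cv m u + 4 * m u) = 512 := by
    intro u hu
    have h := hsingle (fun c => ep c u)
    simp only [ep_zero_left, one_mul] at h
    have hexp : ∀ c, ep c u * (Ff m c ^ 2 + 4 * Ff m c - 60)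
        = ep c u * Ff m c ^ 2 + 4 * (ep c u * Ff m c) - ep c u * 60 := by
      intro c; ring
    simp_rw [hexp] at h
    rw [Finset.sum_sub_distrib, Finset.sum_add_distrib, ← Finset.mul_sum,
      ← Finset.sum_mul, sum_ep_ne hu, zero_mul, sub_zero, idBu, idD] at h
    have hZ : ((2 ^ v : ℕ) : ℤ) * ((Cv m u + 4 * m u : ℕ) : ℤ) = 512 := by
      calc ((2 ^ v : ℕ) : ℤ) * ((Cv m u + 4 * m u : ℕ) : ℤ)
          = ((2 ^ v : ℕ) : ℤ) * ((Cv m u : ℕ) : ℤ)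
            + 4 * (((2 ^ v : ℕ) : ℤ) * (m u : ℤ)) := by push_cast; ring
        _ = ((2 ^ v : ℕ) : ℤ) * (∑ x, (m x : ℤ) * m (u + x))
            + 4 * (((2 ^ v : ℕ) : ℤ) * (m u : ℤ)) := by rw [hcast2]
        _ = 512 := h
    exact_mod_cast hZ
  -- equation 3 : third moment
  have e3 : 2 ^ v * (∑ x, ∑ y, m x * m y * m (x + y)) + 4 * (2 ^ v * (∑ x, m x * m x))
      = 11264 := by
    have h := hsingle (Ff m)
    rw [hF0] at h
    have hexp : ∀ c, Ff m c * (Ff m c ^ 2 + 4 * Ff m c - 60)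
        = Ff m c ^ 3 + 4 * Ff m c ^ 2 - 60 * Ff m c := by
      intro c; ring
    simp_rw [hexp] at h
    rw [Finset.sum_sub_distrib, Finset.sum_add_distrib, ← Finset.mul_sum,
      ← Finset.mul_sum, idA m h0, idB, idC, mul_zero, sub_zero] at h
    have hZ : ((2 ^ v : ℕ) : ℤ) * ((∑ x, ∑ y, m x * m y * m (x + y) : ℕ) : ℤ)
        + 4 * (((2 ^ v : ℕ) : ℤ) * ((∑ x, m x * m x : ℕ) : ℤ)) = 11264 := by
      rw [hcast1, hcast3]; linarith
    exact_mod_cast hZ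
  -- bound on second moment
  have bS : (∑ x, m x * m x) ≤ 154 := by
    have h1 : (∑ x, m x * m x) ≤ ∑ x, 7 * m x :=
      Finset.sum_le_sum fun x _ => Nat.mul_le_mul_right _ (hb x)
    rw [← Finset.mul_sum, ht] at h1
    omega
  -- dimension bounds
  have hVlow : 6 ≤ 2 ^ v := by
    have h2 : 2 ^ v * (∑ x, m x * m x) ≤ 2 ^ v * 154 := Nat.mul_le_mul_left _ bS
    by_contra h
    push_neg at h
    interval_cases h' : (2 : ℕ) ^ v <;> omega
  have hVhigh : 2 ^ v ≤ 38 := by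
    have h3 : 240 * 2 ^ v ≤ 11264 := by omega
    omega
  have hv345 : v = 3 ∨ v = 4 ∨ v = 5 := by
    have h3 : 3 ≤ v := by
      by_contra h
      push_neg at h
      have : (2 : ℕ) ^ v ≤ 2 ^ 2 := Nat.pow_le_pow_right (by norm_num) (by omega)
      omega
    have h5 : v ≤ 5 := by
      by_contra h
      push_neg at h
      have : (2 : ℕ) ^ 6 ≤ 2 ^ v := Nat.pow_le_pow_right (by norm_num) (by omega)
      omega
    omega
  -- maximal point
  obtain ⟨u, -, hmax'⟩ := Finset.exists_max_image Finset.univ m ⟨0, Finset.mem_univ 0⟩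
  have hmax : ∀ y, m y ≤ m u := fun y => hmax' y (Finset.mem_univ y)
  have hγ1 : 1 ≤ m u := by
    by_contra h
    push_neg at h
    have hz : ∀ y ∈ Finset.univ, m y = 0 := fun y _ => by have := hmax y; omega
    rw [Finset.sum_eq_zero hz] at ht
    omega
  have hu0 : u ≠ 0 := by
    intro h
    rw [h, h0] at hγ1
    omega
  have hγ7 : m u ≤ 7 := hb u
  -- the three final inequalities
  have h4 : 2 ^ v * (4 * m u) ≤ 512 := by
    have he := e2 u hu0
    calc 2 ^ v * (4 * m u) ≤ 2 ^ v * (Cv m u + 4 * m u) := Nat.mul_le_mul_left _ (by omega)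
      _ = 512 := he
  have hQ : m u + (∑ y ∈ Finset.univ.erase u, m y) = 22 := by
    rw [← ht]
    exact Finset.add_sum_erase _ m (Finset.mem_univ u)
  have hR : m u * m u + (∑ y ∈ Finset.univ.erase u, m y * m y) = ∑ x, m x * m x := by
    exact Finset.add_sum_erase _ (fun y => m y * m y) (Finset.mem_univ u)
  have hRQ : (∑ y ∈ Finset.univ.erase u, m y * m y)
      ≤ m u * (∑ y ∈ Finset.univ.erase u, m y) := by
    rw [Finset.mul_sum]
    exact Finset.sum_le_sum fun y _ => Nat.mul_le_mul_right _ (hmax y)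
  have h7 : 2 ^ v * (2 * m u * (∑ y ∈ Finset.univ.erase u, m y * m y))
      ≤ 512 * (∑ y ∈ Finset.univ.erase u, m y) := by
    have key : ∀ y ∈ Finset.univ.erase u,
        2 ^ v * (2 * m u * (m y * m y)) ≤ 512 * m y := by
      intro y hy
      have hyu : y ≠ u := (Finset.mem_erase.mp hy).1
      by_cases hy0 : m y = 0
      · simp [hy0]
      have hne0 : y ≠ 0 := by
        intro h
        rw [h, h0] at hy0
        exact hy0 rfl
      have huy0 : u + y ≠ 0 := fun h => hyu (wadd_eq_zero.mp h)
      have he := e2 (u + y) huy0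
      have hpair : m u * m y + m y * m u ≤ Cv m (u + y) := by
        have hss : ({u, y} : Finset (Fin v → ZMod 2)) ⊆ Finset.univ := Finset.subset_univ _
        have hp : ∑ x ∈ ({u, y} : Finset (Fin v → ZMod 2)), m x * m (u + y + x)
            = m u * m (u + y + u) + m y * m (u + y + y) :=
          Finset.sum_pair (Ne.symm hyu)
        rw [wadd_add_self_left, wadd_add_self_right] at hp
        calc m u * m y + m y * m u = ∑ x ∈ ({u, y} : Finset (Fin v → ZMod 2)),
              m x * m (u + y + x) := hp.symm
          _ ≤ Cv m (u + y) := Finset.sum_le_sum_of_subset hss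
      have hle : 2 ^ v * (2 * (m u * m y)) ≤ 512 := by
        rw [← he]
        have hcomm : m y * m u = m u * m y := Nat.mul_comm _ _
        exact Nat.mul_le_mul_left _ (by omega)
      calc 2 ^ v * (2 * m u * (m y * m y)) = 2 ^ v * (2 * (m u * m y)) * m y := by ring
        _ ≤ 512 * m y := Nat.mul_le_mul_right _ hle
    calc 2 ^ v * (2 * m u * (∑ y ∈ Finset.univ.erase u, m y * m y))
        = ∑ y ∈ Finset.univ.erase u, 2 ^ v * (2 * m u * (m y * m y)) := by
          simp only [Finset.mul_sum]
      _ ≤ ∑ y ∈ Finset.univ.erase u, 512 * m y := Finset.sum_le_sum key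
      _ = 512 * (∑ y ∈ Finset.univ.erase u, m y) := (Finset.mul_sum _ _ _).symm
  -- endgame
  set γ := m u with hγ
  set Q := ∑ y ∈ Finset.univ.erase u, m y with hQdef
  set R := ∑ y ∈ Finset.univ.erase u, m y * m y with hRdef
  set S := ∑ x, m x * m x with hSdef
  clear_value γ Q R S
  rcases hv345 with rfl | rfl | rfl <;> norm_num at e1 h4 h7 <;>
    interval_cases γ <;> omega

end Span

section Core

theorem core : ∀ (v : ℕ) (m : (Fin v → ZMod 2) → ℕ), m 0 = 0 → (∀ x, m x ≤ 7) →
    ∑ x, m x = 22 → (∀ c, c ≠ 0 → Mc m c % 8 = 6) → False := by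
  intro v
  induction v with
  | zero =>
    intro m h0 _ ht _
    have huniv : (Finset.univ : Finset (Fin 0 → ZMod 2)) = {0} := by
      apply Finset.eq_singleton_iff_unique_mem.mpr
      exact ⟨Finset.mem_univ _, fun x _ => funext fun i => i.elim0⟩
    rw [huniv, Finset.sum_singleton, h0] at ht
    omega
  | succ n ih =>
    intro m h0 hb ht hM
    by_cases hsp : ∀ c, c ≠ 0 → ∃ x, m x ≠ 0 ∧ dt c x ≠ 0
    · exact spanCase m h0 hb ht hM hsp
    push_neg at hsp
    obtain ⟨c, hc0, hker⟩ := hsp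
    obtain ⟨i, hi⟩ : ∃ i, c i ≠ 0 := by
      by_contra h
      push_neg at h
      exact hc0 (funext fun i => h i)
    have hci : c i = 1 := zmod2_ne_zero hi
    set em : (Fin n → ZMod 2) → (Fin (n + 1) → ZMod 2) :=
      fun y => Fin.insertNth i (∑ k, c (i.succAbove k) * y k) y with hem
    have hemSA : ∀ y k, em y (i.succAbove k) = y k := by
      intro y k
      simp only [hem]
      rw [Fin.insertNth_apply_succAbove]
    have hemI : ∀ y, em y i = ∑ k, c (i.succAbove k) * y k := by
      intro y
      simp only [hem]
      rw [Fin.insertNth_apply_same]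
    have hdtsplit : ∀ (d x : Fin (n + 1) → ZMod 2),
        dt d x = d i * x i + ∑ k, d (i.succAbove k) * x (i.succAbove k) := by
      intro d x
      exact Fin.sum_univ_succAbove (fun j => d j * x j) i
    have hrec : ∀ x : Fin (n + 1) → ZMod 2, dt c x = 0 →
        em (fun k => x (i.succAbove k)) = x := by
      intro x hx
      funext j
      by_cases hj : j = i
      · subst hj
        rw [hemI]
        rw [hdtsplit, hci, one_mul] at hx
        exact zmod2_add_eq_zero hx
      · obtain ⟨k, hk⟩ := Fin.exists_succAbove_eq hj
        rw [← hk, hemSA]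
    have hinj : Function.Injective em := by
      intro a b hab
      funext k
      have h := congrFun hab (i.succAbove k)
      rwa [hemSA, hemSA] at h
    have himg : ∀ x : Fin (n + 1) → ZMod 2, m x ≠ 0 →
        x ∈ Finset.image em Finset.univ := by
      intro x hx
      exact Finset.mem_image.mpr ⟨_, Finset.mem_univ _, hrec x (hker x hx)⟩
    set m' : (Fin n → ZMod 2) → ℕ := fun y => m (em y) with hm'
    have hem0 : em 0 = 0 := by
      have h' := hrec 0 (dt_zero_right c)
      have h'' : (fun k => (0 : Fin (n + 1) → ZMod 2) (i.succAbove k))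
          = (0 : Fin n → ZMod 2) := rfl
      rwa [h''] at h'
    have h0' : m' 0 = 0 := by
      simp only [hm', hem0, h0]
    have hb' : ∀ y, m' y ≤ 7 := fun y => hb _
    have himgsum : ∀ f : (Fin (n + 1) → ZMod 2) → ℕ, (∀ x, m x = 0 → f x = 0) →
        ∑ x, f x = ∑ y, f (em y) := by
      intro f hf
      have h1 : ∑ x, f x = ∑ x ∈ Finset.image em Finset.univ, f x := by
        symm
        apply Finset.sum_subset (Finset.subset_univ _)
        intro x _ hx
        apply hf
        by_contra hmx
        exact hx (himg x hmx)
      rw [h1, Finset.sum_image (fun a _ b _ h => hinj h)]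
    have ht' : ∑ y, m' y = 22 := by
      rw [← himgsum m (fun x h => h)]
      exact ht
    have hM' : ∀ c', c' ≠ 0 → Mc m' c' % 8 = 6 := by
      intro c' hc'
      set d : Fin (n + 1) → ZMod 2 := Fin.insertNth i 0 c' with hd
      have hd0 : d ≠ 0 := by
        obtain ⟨k, hk⟩ : ∃ k, c' k ≠ 0 := by
          by_contra h
          push_neg at h
          exact hc' (funext fun k => h k)
        intro h
        apply hk
        have h2 := congrFun h (i.succAbove k)
        simp only [hd] at h2
        rwa [Fin.insertNth_apply_succAbove] at h2
      have hdt' : ∀ y, dt d (em y) = dt c' y := by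
        intro y
        rw [hdtsplit d (em y)]
        have hdi : d i = 0 := by
          simp only [hd]
          rw [Fin.insertNth_apply_same]
        have hdk : ∀ k, d (i.succAbove k) = c' k := by
          intro k
          simp only [hd]
          rw [Fin.insertNth_apply_succAbove]
        rw [hdi, zero_mul, zero_add]
        rw [dt]
        exact Finset.sum_congr rfl fun k _ => by rw [hdk, hemSA]
      have hMcEq : Mc m d = Mc m' c' := by
        rw [Mc, Mc]
        rw [himgsum (fun x => if dt d x = 0 then m x else 0)
          (fun x h => by simp [h])]
        exact Finset.sum_congr rfl fun y _ => by rw [hdt' y]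
      rw [← hMcEq]
      exact hM d hd0
    exact ih m' h0' hb' ht' hM'

end Core

section Interface

variable {v : ℕ}

/-- The multiplicity function on vectors. -/
noncomputable def mOf (M : Projectivization (ZMod 2) (Fin v → ZMod 2) → ℕ) :
    (Fin v → ZMod 2) → ℕ :=
  fun x => if h : x = 0 then 0 else M (Projectivization.mk _ x h)

lemma units_zmod2 (a : (ZMod 2)ˣ) : (a : ZMod 2) = 1 := by
  rcases zmod2_cases (a : ZMod 2) with h | h
  · exact absurd h a.ne_zero
  · exact h

lemma rep_mk (x : Fin v → ZMod 2) (hx : x ≠ 0) :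
    (Projectivization.mk (ZMod 2) x hx).rep = x := by
  have h := Projectivization.mk_rep (Projectivization.mk (ZMod 2) x hx)
  rw [Projectivization.mk_eq_mk_iff] at h
  obtain ⟨a, ha⟩ := h
  rw [← ha, Units.smul_def, units_zmod2 a, one_smul]

lemma MVal_eq (M : Projectivization (ZMod 2) (Fin v → ZMod 2) → ℕ)
    (K : Submodule (ZMod 2) (Fin v → ZMod 2)) :
    MVal M K = ∑ x ∈ Finset.univ.filter (fun x => x ∈ K ∧ x ≠ 0), mOf M x := by
  classical
  haveI : Finite (Projectivization (ZMod 2) (Fin v → ZMod 2)) := Quotient.finite _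
  have hfin : {P : Projectivization (ZMod 2) (Fin v → ZMod 2) | P.submodule ≤ K}.Finite :=
    Set.toFinite _
  rw [MVal, finsum_mem_eq_finite_toFinset_sum _ hfin]
  refine Finset.sum_bij' (i := fun P _ => P.rep)
    (j := fun x hx => Projectivization.mk (ZMod 2) x (Finset.mem_filter.mp hx).2.2)
    ?_ ?_ ?_ ?_ ?_
  · intro P hP
    rw [Set.Finite.mem_toFinset] at hP
    have hP' : Submodule.span (ZMod 2) {P.rep} ≤ K := by
      rw [← Projectivization.submodule_eq]
      exact hP
    refine Finset.mem_filter.mpr ⟨Finset.mem_univ _, ?_, P.rep_nonzero⟩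
    exact (Submodule.span_singleton_le_iff_mem _ _).mp hP'
  · intro x hx
    rw [Set.Finite.mem_toFinset]
    show (Projectivization.mk (ZMod 2) x _).submodule ≤ K
    rw [Projectivization.submodule_mk]
    exact (Submodule.span_singleton_le_iff_mem _ _).mpr (Finset.mem_filter.mp hx).2.1
  · intro P hP
    exact Projectivization.mk_rep P
  · intro x hx
    exact rep_mk x (Finset.mem_filter.mp hx).2.2
  · intro P hP
    rw [mOf, dif_neg P.rep_nonzero]
    exact congrArg M (Projectivization.mk_rep P).symm

lemma MVal_top (M : Projectivization (ZMod 2) (Fin v → ZMod 2) → ℕ) :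
    MVal M ⊤ = ∑ x, mOf M x := by
  rw [MVal_eq]
  apply Finset.sum_subset (Finset.filter_subset _ _)
  intro x _ hx
  rw [Finset.mem_filter] at hx
  have hx0 : x = 0 := by
    by_contra h
    exact hx ⟨Finset.mem_univ _, Submodule.mem_top, h⟩
  rw [hx0, mOf, dif_pos rfl]

lemma dt_single_right (c : Fin v → ZMod 2) (i : Fin v) : dt c (Pi.single i 1) = c i := by
  rw [dt, Finset.sum_eq_single i]
  · simp
  · intro j _ hj
    rw [Pi.single_eq_of_ne hj, mul_zero]
  · simp

/-- The linear functional given by a coefficient vector. -/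
def phiL (c : Fin v → ZMod 2) : (Fin v → ZMod 2) →ₗ[ZMod 2] ZMod 2 where
  toFun := fun x => dt c x
  map_add' := dt_add_right c
  map_smul' := by
    intro a x
    simp only [RingHom.id_apply, smul_eq_mul, dt, Pi.smul_apply]
    rw [Finset.mul_sum]
    exact Finset.sum_congr rfl fun i _ => by ring

lemma mem_ker_phiL (c x : Fin v → ZMod 2) :
    x ∈ LinearMap.ker (phiL c) ↔ dt c x = 0 := LinearMap.mem_ker

lemma finrank_ker (c : Fin v → ZMod 2) (hc : c ≠ 0) :
    Module.finrank (ZMod 2) (LinearMap.ker (phiL c)) + 1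
      = Module.finrank (ZMod 2) (Fin v → ZMod 2) := by
  obtain ⟨i, hi⟩ : ∃ i, c i ≠ 0 := by
    by_contra h
    push_neg at h
    exact hc (funext fun i => h i)
  have hci : c i = 1 := zmod2_ne_zero hi
  have hsurj : Function.Surjective (phiL c) := by
    intro a
    rcases zmod2_cases a with rfl | rfl
    · exact ⟨0, dt_zero_right c⟩
    · refine ⟨Pi.single i 1, ?_⟩
      show dt c (Pi.single i 1) = 1
      rw [dt_single_right, hci]
  have hr := LinearMap.finrank_range_add_finrank_ker (phiL c)
  rw [LinearMap.range_eq_top.mpr hsurj, finrank_top, Module.finrank_self] at hr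
  omega

end Interface

end Stmt13Aux

theorem stmt_13 (v : ℕ) (M : Projectivization (ZMod 2) (Fin v → ZMod 2) → ℕ)
    (hdiv : IsDivisible 8 M) (hcard : MVal M ⊤ = 22) (hγ : ∀ P, M P ≤ 7) : False := by
  classical
  have h0 : Stmt13Aux.mOf M 0 = 0 := dif_pos rfl
  have hb : ∀ x, Stmt13Aux.mOf M x ≤ 7 := by
    intro x
    rw [Stmt13Aux.mOf]
    split
    · omega
    · exact hγ _
  have ht : ∑ x, Stmt13Aux.mOf M x = 22 := by
    rw [← Stmt13Aux.MVal_top M]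
    exact hcard
  have hM : ∀ c, c ≠ 0 → Stmt13Aux.Mc (Stmt13Aux.mOf M) c % 8 = 6 := by
    intro c hc
    have hrank := Stmt13Aux.finrank_ker c hc
    have hmod := hdiv (LinearMap.ker (Stmt13Aux.phiL c)) hrank
    rw [hcard] at hmod
    have hK : MVal M (LinearMap.ker (Stmt13Aux.phiL c))
        = Stmt13Aux.Mc (Stmt13Aux.mOf M) c := by
      rw [Stmt13Aux.MVal_eq, Stmt13Aux.Mc, Finset.sum_filter]
      refine Finset.sum_congr rfl fun x _ => ?_
      simp only [Stmt13Aux.mem_ker_phiL]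
      by_cases hx0 : x = 0
      · subst hx0
        simp [h0, Stmt13Aux.dt_zero_right]
      · simp [hx0]
    rw [hK] at hmod
    have h2 : Stmt13Aux.Mc (Stmt13Aux.mOf M) c % 8 = 22 % 8 := hmod
    omega
  exact Stmt13Aux.core v (Stmt13Aux.mOf M) h0 hb ht hM
end

section
/- There is no 8-divisible multiset of points in PG(v-1,2) of cardinality 23 with all point multiplicities at most 7. Equivalently, every binary linear code of effective length 23 whose weights are all divisible by 8 has a column of multiplicity at least 8 in any generator matrix. -/
open scoped Classical

/-! Transfer `M` to a weight `m` on `𝔽₂ᵛ` (`m 0 = 0`), and let `W a` be the weight of the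
hyperplane `aᗮ`, so `W 0 = 23`. Divisibility and `W a ≤ 23` force `W a ∈ {7, 15, 23}`.
Double counting pairs (point, hyperplane) and triples (point, point, hyperplane) gives
`4 ∑ₐ (W a - p) (W a - q) = 2ᵛ (|m|² + ∑ m² - 2 (p + q) |m| + 4 p q)`.
With `p, q = 7, 15` every term is `≥ 0` and the term `a = 0` is `128`, so `∑ m² > 63` and some
point `x₁` is at least double. A hyperplane of weight 7 carries a multiset of size 7 whose own
hyperplanes weigh 3 or 7; the identity with `p, q = 3, 7` gives `∑ m² = 7` on it, so it is a set.
Hence every hyperplane through `x₁` weighs at least 15, and summing over them,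
`2ᵛ⁻² (23 + m x₁) ≥ 23 + 15 (2ᵛ⁻¹ - 1)`, which fails for `m x₁ ≤ 7`. -/

open Finset

section Counting

variable {ι : Type*}

theorem sum_filter_eq_zero_add_add [Fintype ι] (φ ψ : ι → ZMod 2) (m : ι → ℕ) :
    ∑ i with φ i = 0, m i + ∑ i with ψ i = 0, m i + ∑ i with φ i + ψ i = 0, m i
      = ∑ i, m i + 2 * ∑ i with φ i = 0 ∧ ψ i = 0, m i := by
  simp only [sum_filter, mul_sum, ← sum_add_distrib]
  refine sum_congr rfl fun i _ => ?_
  -- of `s`, `t`, `s + t` in `ZMod 2`, either exactly one or all three vanish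
  have key : ∀ s t : ZMod 2, ((if s = 0 then 1 else 0) + (if t = 0 then 1 else 0) +
      (if s + t = 0 then 1 else 0) : ℕ) = 1 + 2 * (if s = 0 ∧ t = 0 then 1 else 0) := by decide
  simpa [add_mul, ite_mul, mul_assoc] using congrArg (· * m i) (key (φ i) (ψ i))

theorem Finset.sum_sq_eq_sum_iff {s : Finset ι} {f : ι → ℕ} :
    ∑ i ∈ s, f i ^ 2 = ∑ i ∈ s, f i ↔ ∀ i ∈ s, f i ≤ 1 := by
  rw [eq_comm, sum_eq_sum_iff_of_le fun i _ => Nat.le_self_pow two_ne_zero (f i)]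
  refine forall₂_congr fun i _ => ⟨fun h => ?_, fun h => ?_⟩
  · nlinarith
  · interval_cases f i <;> rfl

end Counting

theorem Module.Dual.two_mul_card_ker {V : Type*} [AddCommGroup V] [Module (ZMod 2) V] [Fintype V]
    {f : Module.Dual (ZMod 2) V} (hf : f ≠ 0) :
    2 * Fintype.card (LinearMap.ker f) = Fintype.card V := by
  rw [Module.card_eq_pow_finrank (K := ZMod 2), Module.card_eq_pow_finrank (K := ZMod 2) (V := V),
    ZMod.card, ← Module.Dual.finrank_ker_add_one_of_ne_zero hf, pow_succ, mul_comm]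

section Binary

variable {V : Type*} [AddCommGroup V] [Module (ZMod 2) V]

theorem Projectivization.rep_mk_zmod_two {x : V} (hx : x ≠ 0) :
    (Projectivization.mk (ZMod 2) x hx).rep = x := by
  obtain ⟨u, hu⟩ := Projectivization.exists_smul_eq_mk_rep (ZMod 2) x hx
  rw [← hu, Units.eq_one u, one_smul]

noncomputable def vectorMult (M : Projectivization (ZMod 2) V → ℕ) (x : V) : ℕ :=
  if hx : x = 0 then 0 else M (Projectivization.mk (ZMod 2) x hx)

theorem vectorMult_zero (M : Projectivization (ZMod 2) V → ℕ) : vectorMult M 0 = 0 := by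
  simp [vectorMult]

theorem vectorMult_rep (M : Projectivization (ZMod 2) V → ℕ) (P : Projectivization (ZMod 2) V) :
    vectorMult M P.rep = M P := by
  simp [vectorMult, P.rep_nonzero]

theorem MVal_eq_sum_vectorMult [Fintype V] (M : Projectivization (ZMod 2) V → ℕ)
    (K : Submodule (ZMod 2) V) : MVal M K = ∑ x with x ∈ K, vectorMult M x := by
  have hbij : Set.BijOn Projectivization.rep {P : Projectivization (ZMod 2) V | P.submodule ≤ K}
      ↑({x | x ∈ K ∧ x ≠ 0} : Finset V) := by
    refine ⟨fun P hP => ?_, fun P _ Q _ h => ?_, fun x hx => ?_⟩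
    · simpa [P.submodule_eq, Submodule.span_singleton_le_iff_mem, P.rep_nonzero] using hP
    · rw [← P.mk_rep, ← Q.mk_rep]
      simp only [h]
    · simp only [coe_filter, mem_univ, true_and, Set.mem_ofPred_eq] at hx
      refine ⟨Projectivization.mk (ZMod 2) x hx.2, ?_, Projectivization.rep_mk_zmod_two hx.2⟩
      simpa [Projectivization.submodule_mk, Submodule.span_singleton_le_iff_mem] using hx.1
  rw [MVal, finsum_mem_eq_of_bijOn _ hbij fun P _ => (vectorMult_rep M P).symm,
    finsum_mem_coe_finset, ← filter_filter]
  exact sum_filter_of_ne fun x _ hx => by rintro rfl; exact hx (vectorMult_zero M)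

theorem vectorMult_le {M : Projectivization (ZMod 2) V → ℕ} {k : ℕ} (hM : ∀ P, M P ≤ k)
    (x : V) :
    vectorMult M x ≤ k := by
  unfold vectorMult
  split_ifs
  exacts [Nat.zero_le k, hM _]

end Binary

section Coordinates

variable {v : ℕ}

theorem two_mul_card_dotProduct_eq_zero {x : Fin v → ZMod 2} (hx : x ≠ 0) :
    2 * #{a | a ⬝ᵥ x = 0} = 2 ^ v := by
  have hf : dotProductEquiv (ZMod 2) (Fin v) x ≠ 0 := by simpa using hx
  have := Module.Dual.two_mul_card_ker hf
  rw [Fintype.card_fun, ZMod.card, Fintype.card_fin] at this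
  rw [← this, ← Fintype.card_subtype]
  exact congrArg (2 * ·) (Fintype.card_congr (Equiv.subtypeEquivRight fun a => by
    simp [dotProduct_comm]))

theorem four_mul_card_dotProduct_eq_zero_and {x y : Fin v → ZMod 2} (hx : x ≠ 0)
    (hy : y ≠ 0) :
    4 * #{a | a ⬝ᵥ x = 0 ∧ a ⬝ᵥ y = 0} = 2 ^ v * if x = y then 2 else 1 := by
  have hcx := two_mul_card_dotProduct_eq_zero hx
  by_cases hxy : x = y
  · subst hxy
    simp only [and_self, if_true]
    omega
  have hxy' : x + y ≠ 0 := fun h => hxy (funext fun i => CharTwo.add_eq_zero.1 (congrFun h i))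
  have h3 := sum_filter_eq_zero_add_add (· ⬝ᵥ x) (· ⬝ᵥ y) (fun _ => 1)
  simp only [← dotProduct_add, sum_const, smul_eq_mul, mul_one, card_univ, Fintype.card_fun,
    ZMod.card, Fintype.card_fin] at h3
  have hcy := two_mul_card_dotProduct_eq_zero hy
  have hcxy := two_mul_card_dotProduct_eq_zero hxy'
  simp only [hxy, if_false]
  omega

-- The weight of the hyperplane `aᗮ`; for `a = 0` it is the total weight.
def hyperplaneMult (m : (Fin v → ZMod 2) → ℕ) (a : Fin v → ZMod 2) : ℕ :=
  ∑ x with a ⬝ᵥ x = 0, m x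

theorem hyperplaneMult_le (m : (Fin v → ZMod 2) → ℕ) (a : Fin v → ZMod 2) :
    hyperplaneMult m a ≤ ∑ x, m x :=
  sum_le_sum_of_subset (filter_subset _ _)

theorem hyperplaneMult_zero (m : (Fin v → ZMod 2) → ℕ) : hyperplaneMult m 0 = ∑ x, m x := by
  simp [hyperplaneMult]

theorem sum_hyperplaneMult_mul (m g : (Fin v → ZMod 2) → ℕ) :
    ∑ a, hyperplaneMult m a * hyperplaneMult g a
      = ∑ x, ∑ y, #{a | a ⬝ᵥ x = 0 ∧ a ⬝ᵥ y = 0} * (m x * g y) := by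
  simp only [hyperplaneMult, sum_filter, sum_mul_sum]
  simp only [card_filter, sum_mul]
  rw [sum_comm]
  refine sum_congr rfl fun x _ => ?_
  rw [sum_comm]
  refine sum_congr rfl fun y _ => sum_congr rfl fun a _ => ?_
  split_ifs <;> simp_all

theorem four_mul_sum_hyperplaneMult_mul {m g : (Fin v → ZMod 2) → ℕ} (hm : m 0 = 0)
    (hg : g 0 = 0) :
    4 * ∑ a, hyperplaneMult m a * hyperplaneMult g a
      = 2 ^ v * ((∑ x, m x) * (∑ x, g x) + ∑ x, m x * g x) := by
  have hterm : ∀ x y, 4 * (#{a | a ⬝ᵥ x = 0 ∧ a ⬝ᵥ y = 0} * (m x * g y))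
      = 2 ^ v * ((m x * g y) + if x = y then m x * g y else 0) := by
    intro x y
    by_cases hx : x = 0
    · simp [hx, hm]
    by_cases hy : y = 0
    · simp [hy, hg]
    rw [← mul_assoc, four_mul_card_dotProduct_eq_zero_and hx hy]
    split_ifs <;> ring
  simp only [sum_hyperplaneMult_mul, mul_sum, hterm]
  simp only [← mul_sum, sum_add_distrib, sum_ite_eq, mem_univ, if_true, sum_mul_sum]

theorem two_mul_sum_hyperplaneMult {m : (Fin v → ZMod 2) → ℕ} (hm : m 0 = 0) :
    2 * ∑ a, hyperplaneMult m a = 2 ^ v * ∑ x, m x := by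
  have hterm : ∀ x, 2 * (#{a | a ⬝ᵥ x = 0} * m x) = 2 ^ v * m x := by
    intro x
    by_cases hx : x = 0
    · simp [hx, hm]
    rw [← mul_assoc, two_mul_card_dotProduct_eq_zero hx]
  have hswap : ∑ a, hyperplaneMult m a = ∑ x, #{a | a ⬝ᵥ x = 0} * m x := by
    simp only [hyperplaneMult, sum_filter, card_filter, sum_mul, ite_mul, one_mul, zero_mul]
    exact sum_comm
  rw [hswap, mul_sum, mul_sum]
  exact sum_congr rfl fun x _ => hterm x

theorem four_mul_sum_hyperplaneMult_quadratic {m : (Fin v → ZMod 2) → ℕ} (hm : m 0 = 0)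
    (p q : ℤ) :
    4 * ∑ a, ((hyperplaneMult m a : ℤ) - p) * ((hyperplaneMult m a : ℤ) - q)
      = 2 ^ v * ((∑ x, m x : ℤ) ^ 2 + ∑ x, (m x : ℤ) ^ 2 - 2 * (p + q) * ∑ x, (m x : ℤ)
        + 4 * p * q) := by
  have h1 : (2 * ∑ a, hyperplaneMult m a : ℤ) = 2 ^ v * ∑ x, (m x : ℤ) := by
    exact_mod_cast two_mul_sum_hyperplaneMult hm
  have h2 : (4 * ∑ a, hyperplaneMult m a * hyperplaneMult m a : ℤ)
      = 2 ^ v * ((∑ x, m x : ℤ) ^ 2 + ∑ x, (m x : ℤ) ^ 2) := by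
    simp only [sq]
    exact_mod_cast four_mul_sum_hyperplaneMult_mul hm hm
  have h0 : ∑ _a : Fin v → ZMod 2, (1 : ℤ) = 2 ^ v := by simp
  have hexpand : ∑ a, ((hyperplaneMult m a : ℤ) - p) * ((hyperplaneMult m a : ℤ) - q)
      = ∑ a, (hyperplaneMult m a * hyperplaneMult m a : ℤ)
        - (p + q) * ∑ a, (hyperplaneMult m a : ℤ)
        + p * q * ∑ _a : Fin v → ZMod 2, (1 : ℤ) := by
    simp only [mul_sum, ← sum_sub_distrib, ← sum_add_distrib]
    exact sum_congr rfl fun a _ => by ring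
  push_cast at h1 h2
  rw [hexpand, h0]
  linear_combination h2 - 2 * (p + q) * h1

theorem hyperplaneMult_add_hyperplaneMult_add (m : (Fin v → ZMod 2) → ℕ)
    (a b : Fin v → ZMod 2) :
    hyperplaneMult m a + hyperplaneMult m b + hyperplaneMult m (a + b)
      = ∑ x, m x + 2 * ∑ x with a ⬝ᵥ x = 0 ∧ b ⬝ᵥ x = 0, m x := by
  simpa only [hyperplaneMult, add_dotProduct] using
    sum_filter_eq_zero_add_add (a ⬝ᵥ ·) (b ⬝ᵥ ·) m

theorem four_mul_sum_hyperplaneMult_through {m : (Fin v → ZMod 2) → ℕ} (hm : m 0 = 0)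
    {x₁ : Fin v → ZMod 2} (hx₁ : x₁ ≠ 0) :
    4 * ∑ a with a ⬝ᵥ x₁ = 0, hyperplaneMult m a = 2 ^ v * (∑ x, m x + m x₁) := by
  have hδ : ∀ a, hyperplaneMult (Pi.single x₁ 1) a = if a ⬝ᵥ x₁ = 0 then 1 else 0 := by
    intro a
    simp [hyperplaneMult, Pi.single_apply]
  have := four_mul_sum_hyperplaneMult_mul hm (g := Pi.single x₁ 1) (by simp [hx₁.symm])
  simpa [hδ, sum_filter, Pi.single_apply] using this

theorem le_one_of_hyperplaneMult_eq_seven {m : (Fin v → ZMod 2) → ℕ} (hm : m 0 = 0)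
    (hdiv : ∀ a, hyperplaneMult m a ≡ ∑ x, m x [MOD 8]) {a₀ : Fin v → ZMod 2}
    (ha₀ : hyperplaneMult m a₀ = 7) {x : Fin v → ZMod 2} (hx : a₀ ⬝ᵥ x = 0) :
    m x ≤ 1 := by
  set g : (Fin v → ZMod 2) → ℕ := fun x => if a₀ ⬝ᵥ x = 0 then m x else 0 with hg
  have hg0 : g 0 = 0 := by simp [hg, hm]
  have hgtot : ∑ x, g x = 7 := by rw [← ha₀, hyperplaneMult, sum_filter]
  -- modulo 8 the three-hyperplane identity gives weight `≡ 3 [MOD 4]` to each `a₀ᗮ ∩ bᗮ`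
  have hgW : ∀ b, hyperplaneMult g b = 3 ∨ hyperplaneMult g b = 7 := by
    intro b
    have hsec : hyperplaneMult g b = ∑ x with a₀ ⬝ᵥ x = 0 ∧ b ⬝ᵥ x = 0, m x := by
      simp only [hyperplaneMult, sum_filter, hg]
      exact sum_congr rfl fun x _ => by split_ifs <;> simp_all
    have h3 := hyperplaneMult_add_hyperplaneMult_add m a₀ b
    have hle := hyperplaneMult_le g b
    have hb := hdiv b
    have hab := hdiv (a₀ + b)
    have ha := hdiv a₀
    rw [← hsec] at h3
    unfold Nat.ModEq at hb hab ha
    omega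
  have hquad := four_mul_sum_hyperplaneMult_quadratic hg0 3 7
  rw [sum_eq_zero fun b _ => by rcases hgW b with h | h <;> rw [h] <;> norm_num] at hquad
  push_cast [← Nat.cast_sum, hgtot] at hquad
  have hsq : ∑ x, g x ^ 2 = ∑ x, g x := by
    have hsq' : (∑ x, (g x : ℤ) ^ 2) = 7 := by nlinarith [pow_pos (two_pos : (0 : ℤ) < 2) v]
    rw [hgtot]
    exact_mod_cast hsq'
  simpa [hg, hx] using Finset.sum_sq_eq_sum_iff.1 hsq x (mem_univ x)

theorem hyperplaneMult_mem_of_sum_eq_23 {m : (Fin v → ZMod 2) → ℕ} (htot : ∑ x, m x = 23)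
    (hdiv : ∀ a, hyperplaneMult m a ≡ ∑ x, m x [MOD 8]) (a : Fin v → ZMod 2) :
    hyperplaneMult m a = 7 ∨ hyperplaneMult m a = 15 ∨ hyperplaneMult m a = 23 := by
  have hle := hyperplaneMult_le m a
  have ha := hdiv a
  unfold Nat.ModEq at ha
  omega

theorem exists_two_le_of_sum_eq_23 {m : (Fin v → ZMod 2) → ℕ} (hm : m 0 = 0)
    (htot : ∑ x, m x = 23) (hdiv : ∀ a, hyperplaneMult m a ≡ ∑ x, m x [MOD 8]) :
    ∃ x, 2 ≤ m x := by
  by_contra! hlt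
  have hsq : ∑ x, (m x : ℤ) ^ 2 = 23 := by
    exact_mod_cast (Finset.sum_sq_eq_sum_iff.2 fun x _ => Nat.le_of_lt_succ (hlt x)).trans htot
  have hquad := four_mul_sum_hyperplaneMult_quadratic hm 7 15
  push_cast [← Nat.cast_sum, htot, hsq] at hquad
  have hterm : ∀ a,
      0 ≤ ((hyperplaneMult m a : ℤ) - 7) * ((hyperplaneMult m a : ℤ) - 15) := by
    intro a
    rcases hyperplaneMult_mem_of_sum_eq_23 htot hdiv a with h | h | h <;> rw [h] <;> norm_num
  have hzero := single_le_sum (fun a _ => hterm a) (mem_univ 0)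
  rw [hyperplaneMult_zero] at hzero
  push_cast [htot] at hzero
  have hpos : (0 : ℤ) < 2 ^ v := by positivity
  linarith

theorem false_of_sum_eq_23 {m : (Fin v → ZMod 2) → ℕ} (hm : m 0 = 0) (htot : ∑ x, m x = 23)
    (hle : ∀ x, m x ≤ 7) (hdiv : ∀ a, hyperplaneMult m a ≡ ∑ x, m x [MOD 8]) : False := by
  obtain ⟨x₁, hx₁⟩ := exists_two_le_of_sum_eq_23 hm htot hdiv
  have hx₁0 : x₁ ≠ 0 := by rintro rfl; omega
  have hthrough : ∀ a, a ⬝ᵥ x₁ = 0 → (15 : ℤ) ≤ hyperplaneMult m a := by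
    intro a ha
    have h7 : hyperplaneMult m a ≠ 7 := fun h7 =>
      absurd (le_one_of_hyperplaneMult_eq_seven hm hdiv h7 ha) (by omega)
    rcases hyperplaneMult_mem_of_sum_eq_23 htot hdiv a with h | h | h <;> simp_all
  have hsum := four_mul_sum_hyperplaneMult_through hm hx₁0
  have hcard := two_mul_card_dotProduct_eq_zero hx₁0
  -- the `2 ^ (v - 1)` hyperplanes through `x₁` weigh at most `2 ^ (v - 2) * 30` in total,
  -- but at least `15` each, and `23` for `a = 0`
  have hzero := single_le_sum (s := {a | a ⬝ᵥ x₁ = 0})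
    (f := fun a => (hyperplaneMult m a : ℤ) - 15)
    (fun a ha => by simpa using hthrough a (by simpa using ha))
    (mem_filter.2 ⟨mem_univ 0, zero_dotProduct x₁⟩)
  simp only [hyperplaneMult_zero, htot, sum_sub_distrib, sum_const, nsmul_eq_mul] at hzero
  rw [htot] at hsum
  have hle₁ : (2 : ℤ) ^ v * m x₁ ≤ 2 ^ v * 7 := by gcongr; exact_mod_cast hle x₁
  push_cast at hzero
  zify at hsum hcard
  linarith

theorem hyperplaneMult_modEq_of_isDivisible {Δ : ℕ}
    {M : Projectivization (ZMod 2) (Fin v → ZMod 2) → ℕ} (hdiv : IsDivisible Δ M)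
    (a : Fin v → ZMod 2) :
    hyperplaneMult (vectorMult M) a ≡ ∑ x, vectorMult M x [MOD Δ] := by
  by_cases ha : a = 0
  · rw [ha, hyperplaneMult_zero]
  set H := LinearMap.ker (dotProductEquiv (ZMod 2) (Fin v) a)
  have hH : Module.finrank (ZMod 2) H + 1 = Module.finrank (ZMod 2) (Fin v → ZMod 2) :=
    Module.Dual.finrank_ker_add_one_of_ne_zero (by simpa using ha)
  have := hdiv H hH
  simpa [MVal_eq_sum_vectorMult, H, hyperplaneMult] using this

end Coordinates

theorem stmt_14 (v : ℕ) (M : Projectivization (ZMod 2) (Fin v → ZMod 2) → ℕ)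
    (hdiv : IsDivisible 8 M) (hcard : MVal M ⊤ = 23) (hγ : ∀ P, M P ≤ 7) : False := by
  have htot : ∑ x, vectorMult M x = 23 := by
    simpa [MVal_eq_sum_vectorMult] using hcard
  exact false_of_sum_eq_23 (vectorMult_zero M) htot (vectorMult_le hγ)
    (hyperplaneMult_modEq_of_isDivisible hdiv)
end
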